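/- arXiv:2412.19341 — 2 statements merged into one kernel-verified Lean document; each statement's English description precedes it below -/
import Mathlib

section
/- Let φ_{kk′}(ℓ) be the minimum of √((1/m)Σ_{i=1}^m (⟨A_i, x xᵀ⟩ − ⟨A_i, x0 x0ᵀ⟩ + ε_i)²) over x ∈ {0,1}ⁿ with ‖x‖₀ = k′ and ⟨x, x0⟩ = ℓ, where x0 ∈ {0,1}ⁿ has ‖x0‖₀ = k and the A_i are i.i.d. Gaussian matrices. Let α_k be a sequence with α_k/log(k) → ∞ as k, m → ∞, and let N_{k′ℓ} = C(k, ℓ)·C(n−k, k′−ℓ). Then with probability 1 − o_k(1) (indeed, at least 1 − e^{−α_k}), φ_{kk′}(ℓ) ≥ √( ((k′)² + k² − 2ℓ²) · (1 − 2√((log(N_{k′ℓ}) + α_k)/m)) ). -/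
open MeasureTheory ProbabilityTheory Filter Finset

noncomputable section

/-- Matrix inner product `⟨A, X⟩ = ∑_{p,q} A[p,q] X[p,q]`. -/
def mip {n : ℕ} (A X : Fin n → Fin n → ℝ) : ℝ := ∑ p, ∑ q, A p q * X p q

/-- Outer product `x yᵀ`. -/
def outer {n : ℕ} (x y : Fin n → ℝ) : Fin n → Fin n → ℝ := fun p q => x p * y q

/-- Number of nonzero coordinates (`ℓ0` norm). -/
def sparsity {n : ℕ} (x : Fin n → ℝ) : ℕ := (Function.support x).ncard

/-- The restricted optimum `φ_{kk′}(ℓ)`: the minimum of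
`√((1/m) ∑ᵢ (⟨Aᵢ, xxᵀ⟩ − ⟨Aᵢ, x₀x₀ᵀ⟩ + εᵢ)²)` over binary `x` with `‖x‖₀ = k′` and
`⟨x, x₀⟩ = ℓ`. -/
def phiVal {n m : ℕ} (A : Fin m → Fin n → Fin n → ℝ) (ε : Fin m → ℝ)
    (x0 : Fin n → ℝ) (k' ℓ : ℕ) : ℝ :=
  sInf {r : ℝ | ∃ x : Fin n → ℝ, (∀ i, x i = 0 ∨ x i = 1) ∧ sparsity x = k' ∧
      (∑ i, x i * x0 i) = (ℓ : ℝ) ∧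
      r = Real.sqrt ((1 / (m : ℝ)) *
        ∑ i, (mip (A i) (outer x x) - mip (A i) (outer x0 x0) + ε i) ^ 2)}

/-- The first-moments curve
`Γ̃(ℓ) = √(((k′)² + k² − 2ℓ²)(1 − 2√((log N_{k′ℓ} + α)/m)))`
with `N_{k′ℓ} = C(k,ℓ) C(n−k, k′−ℓ)`. -/
def firstMomentCurve (n k k' m : ℕ) (α : ℝ) (ℓ : ℕ) : ℝ :=
  Real.sqrt (((k' : ℝ) ^ 2 + (k : ℝ) ^ 2 - 2 * (ℓ : ℝ) ^ 2) *
    (1 - 2 * Real.sqrt ((Real.log ((Nat.choose k ℓ * Nat.choose (n - k) (k' - ℓ) : ℕ)) + α)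
        / (m : ℝ))))


set_option maxHeartbeats 1000000

section AuxiliaryLemmas
open Real
open scoped NNReal ENNReal


lemma log_one_sub_le {u : ℝ} (hu0 : 0 ≤ u) (hu1 : u < 1) :
    Real.log (1 - u) ≤ -u - u ^ 2 / 2 := by
  set f : ℝ → ℝ := fun y => Real.log (1 - y) + (y + y ^ 2 / 2) with hf
  have hder : ∀ x ∈ Set.Ioo (0:ℝ) 1, HasDerivAt f (-1 / (1 - x) + (1 + x)) x := by
    intro x hx
    have hne : (1 : ℝ) - x ≠ 0 := by
      have := hx.2; intro h; nlinarith
    have h1 : HasDerivAt (fun y : ℝ => 1 - y) (-1) x := by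
      simpa using (hasDerivAt_id x).const_sub 1
    have h2 : HasDerivAt (fun y : ℝ => Real.log (1 - y)) (-1 / (1 - x)) x := by
      simpa using h1.log hne
    have h3 : HasDerivAt (fun y : ℝ => y + y ^ 2 / 2) (1 + x) x := by
      have h4 := (hasDerivAt_id x).add ((hasDerivAt_pow 2 x).div_const 2)
      exact (by simpa [pow_one] using h4 : HasDerivAt (id + fun x : ℝ => x ^ 2 / 2) (1 + x) x)
    exact h2.add h3
  have hcont : ContinuousOn f (Set.Ico 0 1) := by
    intro x hx
    have hne : (1 : ℝ) - x ≠ 0 := by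
      have := hx.2; intro h; nlinarith
    exact ((continuous_const.sub continuous_id).continuousAt.log hne |>.add
      ((continuous_id.add ((continuous_pow 2).div_const 2)).continuousAt)).continuousWithinAt
  have hanti : AntitoneOn f (Set.Ico 0 1) := by
    apply antitoneOn_of_deriv_nonpos (convex_Ico 0 1) hcont
    · intro x hx
      rw [interior_Ico] at hx
      exact (hder x hx).differentiableAt.differentiableWithinAt
    · intro x hx
      rw [interior_Ico] at hx
      rw [(hder x hx).deriv]
      have h1 : 0 < 1 - x := by linarith [hx.2]
      rw [div_add' _ _ _ h1.ne', div_nonpos_iff]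
      right
      constructor
      · nlinarith [hx.1]
      · linarith
  have h0 : f 0 = 0 := by simp [hf]
  have := hanti (Set.mem_Ico.2 ⟨le_refl 0, one_pos⟩) (Set.mem_Ico.2 ⟨hu0, hu1⟩) hu0
  rw [h0] at this
  simp only [hf] at this
  linarith

lemma integrable_of_bounded_meas {Ω : Type*} [MeasurableSpace Ω] {μ : Measure Ω}
    [IsFiniteMeasure μ] {f : Ω → ℝ} (hf : Measurable f) {C : ℝ} (h : ∀ ω, ‖f ω‖ ≤ C) :
    Integrable f μ :=
  (integrable_const C).mono' hf.aestronglyMeasurable (Filter.Eventually.of_forall h)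

/-- One-step Gaussian integral. -/
lemma gauss_step (s b : ℝ) (hs : 0 ≤ s) :
    ∫ x, Real.exp (-(s * (x + b) ^ 2)) ∂(gaussianReal 0 1) =
      (Real.sqrt (1 + 2 * s))⁻¹ * Real.exp (-(s / (1 + 2 * s)) * b ^ 2) := by
  have h12 : (0:ℝ) < 1 + 2 * s := by linarith
  have hsa : (0:ℝ) < s + 1/2 := by linarith
  rw [gaussianReal_of_var_ne_zero 0 one_ne_zero]
  have hpdf : gaussianPDF 0 1 = fun x => ((Real.toNNReal (gaussianPDFReal 0 1 x) : ℝ≥0) : ℝ≥0∞) := by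
    funext x; rw [gaussianPDF_def]; rfl
  rw [hpdf, integral_withDensity_eq_integral_smul
    ((measurable_gaussianPDFReal 0 1).real_toNNReal)]
  have hpt : ∀ x : ℝ, (Real.toNNReal (gaussianPDFReal 0 1 x)) • Real.exp (-(s * (x + b) ^ 2))
      = ((Real.sqrt (2 * π))⁻¹ * Real.exp (-(s / (1 + 2 * s)) * b ^ 2)) *
        Real.exp (-((s + 1/2) * (x + s * b / (s + 1/2)) ^ 2)) := by
    intro x
    rw [NNReal.smul_def, Real.coe_toNNReal _ (gaussianPDFReal_nonneg 0 1 x)]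
    rw [gaussianPDFReal_def]
    push_cast
    rw [mul_one]
    have hexp : -(x - 0) ^ 2 / (2 * 1) + -(s * (x + b) ^ 2) =
        (-(s / (1 + 2 * s)) * b ^ 2) + (-((s + 1/2) * (x + s * b / (s + 1/2)) ^ 2)) := by
      field_simp
      ring
    calc (Real.sqrt (2 * π))⁻¹ * Real.exp (-(x - 0) ^ 2 / (2 * 1)) * Real.exp (-(s * (x + b) ^ 2))
        = (Real.sqrt (2 * π))⁻¹ * Real.exp (-(x - 0) ^ 2 / (2 * 1) + -(s * (x + b) ^ 2)) := by
          rw [Real.exp_add]; ring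
      _ = _ := by rw [hexp, Real.exp_add]; ring
  rw [integral_congr_ae (Filter.Eventually.of_forall hpt), integral_const_mul]
  have htrans : ∫ x : ℝ, Real.exp (-((s + 1/2) * (x + s * b / (s + 1/2)) ^ 2)) =
      ∫ x : ℝ, Real.exp (-((s + 1/2) * x ^ 2)) := by
    exact integral_add_right_eq_self (fun x => Real.exp (-((s + 1/2) * x ^ 2))) _
  rw [htrans]
  have hg : ∫ x : ℝ, Real.exp (-((s + 1/2) * x ^ 2)) = Real.sqrt (π / (s + 1/2)) := by
    simp_rw [← neg_mul]
    exact integral_gaussian (s + 1/2)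
  rw [hg]
  have halg : (Real.sqrt (2 * π))⁻¹ * Real.sqrt (π / (s + 1/2)) = (Real.sqrt (1 + 2 * s))⁻¹ := by
    rw [← Real.sqrt_inv, ← Real.sqrt_mul (by positivity), ← Real.sqrt_inv]
    congr 1
    field_simp
    ring
  calc (Real.sqrt (2*π))⁻¹ * Real.exp (-(s / (1 + 2*s)) * b ^ 2) * Real.sqrt (π / (s + 1/2))
      = ((Real.sqrt (2*π))⁻¹ * Real.sqrt (π / (s + 1/2))) * Real.exp (-(s / (1+2*s)) * b ^ 2) := by ring
    _ = _ := by rw [halg]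

lemma key_bound {Ω : Type*} [MeasurableSpace Ω] (μ : Measure Ω) [IsProbabilityMeasure μ]
    {m : ℕ} {κ : Type*} [DecidableEq κ]
    (g : (Fin m × κ) ⊕ Fin m → Ω → ℝ) (hmeas : ∀ t, Measurable (g t))
    (hindep : iIndepFun g μ)
    (S : Finset (Fin m × κ)) :
    ∀ (_ : ∀ t ∈ S, Measure.map (g (Sum.inl t)) μ = gaussianReal 0 1)
      (s : Fin m → ℝ), (∀ i, 0 ≤ s i) →
    ∫ ω, ∏ i, Real.exp (-(s i * (g (Sum.inr i) ω
        + ∑ t ∈ S.filter (fun t => t.1 = i), g (Sum.inl t) ω) ^ 2)) ∂μ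
      ≤ ∏ i, (Real.sqrt (1 + 2 * s i * ((S.filter (fun t => t.1 = i)).card : ℝ)))⁻¹ := by
  classical
  induction S using Finset.induction_on with
  | empty =>
    intro _ s hs
    simp only [Finset.filter_empty, Finset.sum_empty, Finset.card_empty, Nat.cast_zero,
      mul_zero, add_zero, Real.sqrt_one, inv_one, Finset.prod_const_one]
    have hb : ∀ ω, ∏ i : Fin m, Real.exp (-(s i * (g (Sum.inr i) ω) ^ 2)) ≤ 1 := by
      intro ω
      apply Finset.prod_le_one
      · intro i _; positivity
      · intro i _
        rw [Real.exp_le_one_iff]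
        have : 0 ≤ s i * (g (Sum.inr i) ω) ^ 2 := mul_nonneg (hs i) (sq_nonneg _)
        linarith
    have hmeasf : Measurable fun ω => ∏ i : Fin m, Real.exp (-(s i * (g (Sum.inr i) ω) ^ 2)) := by
      apply Finset.measurable_prod
      intro i _
      exact ((((hmeas (Sum.inr i)).pow_const 2).const_mul (s i)).neg).exp
    have hint : Integrable (fun ω => ∏ i : Fin m, Real.exp (-(s i * (g (Sum.inr i) ω) ^ 2))) μ := by
      apply integrable_of_bounded_meas hmeasf (C := 1)
      intro ω
      rw [Real.norm_eq_abs, abs_of_nonneg (by positivity)]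
      exact hb ω
    calc ∫ ω, ∏ i : Fin m, Real.exp (-(s i * (g (Sum.inr i) ω) ^ 2)) ∂μ
        ≤ ∫ _, (1:ℝ) ∂μ := integral_mono hint (integrable_const 1) hb
      _ = 1 := by simp
  | @insert a S' ha IH =>
    intro hgauss s hs
    have hgauss' : ∀ t ∈ S', Measure.map (g (Sum.inl t)) μ = gaussianReal 0 1 :=
      fun t ht => hgauss t (Finset.mem_insert_of_mem ht)
    have hσ : 0 ≤ s a.1 := hs a.1
    have h2σ : (0:ℝ) < 1 + 2 * s a.1 := by linarith
    set σ' : ℝ := s a.1 / (1 + 2 * s a.1) with hσ'def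
    have hσ'0 : 0 ≤ σ' := div_nonneg hσ h2σ.le
    set s' : Fin m → ℝ := Function.update s a.1 σ' with hs'def
    have hs' : ∀ i, 0 ≤ s' i := by
      intro i
      by_cases h : i = a.1
      · subst h; rw [hs'def, Function.update_self]; exact hσ'0
      · rw [hs'def, Function.update_of_ne h]; exact hs i
    -- the finset of "other" coordinates
    set T : Finset ((Fin m × κ) ⊕ Fin m) :=
      S'.image Sum.inl ∪ Finset.univ.image Sum.inr with hTdef
    have hinlT : ∀ t ∈ S', Sum.inl t ∈ T := by
      intro t ht; simp [hTdef, ht]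
    have hinrT : ∀ i : Fin m, Sum.inr i ∈ T := by
      intro i; simp [hTdef]
    have hanotT : Sum.inl a ∉ T := by simp [hTdef, ha]
    set X : Ω → ℝ := g (Sum.inl a) with hXdef
    set R : Ω → ((Fin m × κ) ⊕ Fin m) → ℝ := fun ω j => if j ∈ T then g j ω else 0 with hRdef
    have hRmeas : Measurable R := by
      apply measurable_pi_lambda
      intro j
      by_cases h : j ∈ T
      · simpa [hRdef, h] using hmeas j
      · simp only [hRdef, h, if_false]; exact measurable_const
    have hXR : IndepFun R X μ := by
      have hdisj : Disjoint ({Sum.inl a} : Finset ((Fin m × κ) ⊕ Fin m)) T := by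
        simp [Finset.disjoint_left, hanotT]
      have hind0 := hindep.indepFun_finset {Sum.inl a} T hdisj hmeas
      have hext : Measurable (fun (v : {x : (Fin m × κ) ⊕ Fin m // x ∈ T} → ℝ)
          (j : (Fin m × κ) ⊕ Fin m) => if h : j ∈ T then v ⟨j, h⟩ else 0) := by
        apply measurable_pi_lambda
        intro j
        by_cases h : j ∈ T
        · simp only [h, dif_pos]; exact measurable_pi_apply _
        · simp only [h, dif_neg, not_false_iff]; exact measurable_const
      have heval : Measurable (fun (v : {x : (Fin m × κ) ⊕ Fin m // x ∈ ({Sum.inl a} : Finset ((Fin m × κ) ⊕ Fin m))} → ℝ) =>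
          v ⟨Sum.inl a, Finset.mem_singleton_self _⟩) := measurable_pi_apply _
      have h2 := (hind0.comp heval hext).symm
      have hR : R = (fun (v : {x : (Fin m × κ) ⊕ Fin m // x ∈ T} → ℝ)
          (j : (Fin m × κ) ⊕ Fin m) => if h : j ∈ T then v ⟨j, h⟩ else 0) ∘
          (fun ω (i : {x : (Fin m × κ) ⊕ Fin m // x ∈ T}) => g i ω) := by
        funext ω j
        by_cases h : j ∈ T <;> simp [hRdef, h]
      rw [hR]
      exact h2
    -- main chain
    set B : (((Fin m × κ) ⊕ Fin m) → ℝ) → ℝ :=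
      fun e => e (Sum.inr a.1) + ∑ t ∈ S'.filter (fun t => t.1 = a.1), e (Sum.inl t) with hBdef
    set Φ : ((((Fin m × κ) ⊕ Fin m) → ℝ) × ℝ) → ℝ := fun p =>
      ∏ i, Real.exp (-(s i * (p.1 (Sum.inr i)
        + ∑ t ∈ (insert a S').filter (fun t => t.1 = i),
            (if t = a then p.2 else p.1 (Sum.inl t))) ^ 2)) with hΦdef
    have hΦmeas : Measurable Φ := by
      apply Finset.measurable_prod
      intro i _
      have hb : Measurable (fun p : ((((Fin m × κ) ⊕ Fin m) → ℝ) × ℝ) => p.1 (Sum.inr i)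
          + ∑ t ∈ (insert a S').filter (fun t => t.1 = i),
              (if t = a then p.2 else p.1 (Sum.inl t))) := by
        apply Measurable.add
        · exact (measurable_pi_apply _).comp measurable_fst
        · apply Finset.measurable_sum
          intro t _
          by_cases hta : t = a
          · simp only [hta, if_pos]; exact measurable_snd
          · simp only [hta, if_neg, not_false_iff]
            exact (measurable_pi_apply _).comp measurable_fst
      exact (((hb.pow_const 2).const_mul (s i)).neg).exp
    have hΦbd : ∀ p, ‖Φ p‖ ≤ 1 := by
      intro p
      rw [Real.norm_eq_abs, abs_of_nonneg (by positivity)]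
      apply Finset.prod_le_one
      · intro i _; positivity
      · intro i _
        rw [Real.exp_le_one_iff]
        have : 0 ≤ s i * (p.1 (Sum.inr i)
          + ∑ t ∈ (insert a S').filter (fun t => t.1 = i),
              (if t = a then p.2 else p.1 (Sum.inl t))) ^ 2 := mul_nonneg (hs i) (sq_nonneg _)
        linarith
    have hpt : (fun ω => Φ (R ω, X ω)) = fun ω =>
        ∏ i, Real.exp (-(s i * (g (Sum.inr i) ω
          + ∑ t ∈ (insert a S').filter (fun t => t.1 = i), g (Sum.inl t) ω) ^ 2)) := by
      funext ω
      apply Finset.prod_congr rfl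
      intro i _
      have harg : R ω (Sum.inr i) + (∑ t ∈ (insert a S').filter (fun t => t.1 = i),
          (if t = a then X ω else R ω (Sum.inl t)))
          = g (Sum.inr i) ω + ∑ t ∈ (insert a S').filter (fun t => t.1 = i),
            g (Sum.inl t) ω := by
        congr 1
        · simp [hRdef, hinrT i]
        · refine Finset.sum_congr rfl fun t ht => ?_
          rw [Finset.mem_filter] at ht
          by_cases hta : t = a
          · subst hta; simp [hXdef]
          · have ht' : t ∈ S' := Finset.mem_of_mem_insert_of_ne ht.1 hta
            simp [hta, hRdef, hinlT t ht']
      exact congrArg (fun z => Real.exp (-(s i * z ^ 2))) harg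
    have hpair : AEMeasurable (fun ω => (R ω, X ω)) μ :=
      (hRmeas.prodMk (hmeas (Sum.inl a))).aemeasurable
    have hmap : μ.map (fun ω => (R ω, X ω)) = (μ.map R).prod (μ.map X) :=
      (indepFun_iff_map_prod_eq_prod_map_map hRmeas.aemeasurable
        (hmeas (Sum.inl a)).aemeasurable).mp hXR
    have hXlaw : μ.map X = gaussianReal 0 1 := hgauss a (Finset.mem_insert_self a S')
    haveI : IsProbabilityMeasure (μ.map R) := Measure.isProbabilityMeasure_map hRmeas.aemeasurable
    haveI : IsProbabilityMeasure (μ.map X) := by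
      rw [hXlaw]; infer_instance
    have hΦint : Integrable Φ ((μ.map R).prod (μ.map X)) :=
      integrable_of_bounded_meas hΦmeas hΦbd
    have step1 : ∫ ω, ∏ i, Real.exp (-(s i * (g (Sum.inr i) ω
          + ∑ t ∈ (insert a S').filter (fun t => t.1 = i), g (Sum.inl t) ω) ^ 2)) ∂μ
        = ∫ e, ∫ x, Φ (e, x) ∂(μ.map X) ∂(μ.map R) := by
      rw [← hpt, ← integral_map hpair hΦmeas.aestronglyMeasurable, hmap,
        integral_prod Φ hΦint]
    -- decompose Φ for fixed e
    set C : (((Fin m × κ) ⊕ Fin m) → ℝ) → ℝ := fun e =>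
      ∏ i ∈ Finset.univ.erase a.1, Real.exp (-(s i * (e (Sum.inr i)
        + ∑ t ∈ S'.filter (fun t => t.1 = i), e (Sum.inl t)) ^ 2)) with hCdef
    have hCnonneg : ∀ e, 0 ≤ C e := by
      intro e; rw [hCdef]; positivity
    have hfilter_at : (insert a S').filter (fun t => t.1 = a.1)
        = insert a (S'.filter (fun t => t.1 = a.1)) := by
      rw [Finset.filter_insert, if_pos rfl]
    have hfilter_ne : ∀ i, i ≠ a.1 → (insert a S').filter (fun t => t.1 = i)
        = S'.filter (fun t => t.1 = i) := by
      intro i hi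
      rw [Finset.filter_insert, if_neg (fun h => hi h.symm)]
    have hanotin : a ∉ S'.filter (fun t => t.1 = a.1) := fun h => ha (Finset.mem_filter.mp h).1
    have hΦfac : ∀ e x, Φ (e, x) = C e * Real.exp (-(s a.1 * (x + B e) ^ 2)) := by
      intro e x
      have key := (Finset.mul_prod_erase Finset.univ
        (fun i => Real.exp (-(s i * (e (Sum.inr i)
          + ∑ t ∈ (insert a S').filter (fun t => t.1 = i),
            (if t = a then x else e (Sum.inl t))) ^ 2))) (Finset.mem_univ a.1)).symm
      calc Φ (e, x) = _ := key
        _ = Real.exp (-(s a.1 * (x + B e) ^ 2)) * C e := by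
            congr 1
            · -- the a.1 factor
              rw [hfilter_at, Finset.sum_insert hanotin, if_pos rfl]
              have h1 : ∑ t ∈ S'.filter (fun t => t.1 = a.1),
                  (if t = a then x else e (Sum.inl t))
                  = ∑ t ∈ S'.filter (fun t => t.1 = a.1), e (Sum.inl t) :=
                Finset.sum_congr rfl fun t ht => if_neg (fun (h : t = a) => hanotin (h ▸ ht))
              rw [h1]
              exact congrArg (fun z => Real.exp (-(s a.1 * z ^ 2))) (by
                simp only [hBdef]; ring)
            · -- the erase part equals C e
              rw [hCdef]
              refine Finset.prod_congr rfl fun i hi => ?_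
              have hine : i ≠ a.1 := (Finset.mem_erase.mp hi).1
              have harg : e (Sum.inr i) + (∑ t ∈ (insert a S').filter (fun t => t.1 = i),
                  (if t = a then x else e (Sum.inl t)))
                  = e (Sum.inr i) + ∑ t ∈ S'.filter (fun t => t.1 = i), e (Sum.inl t) := by
                rw [hfilter_ne i hine]
                congr 1
                refine Finset.sum_congr rfl fun t ht => ?_
                exact if_neg (fun (h : t = a) => hine ((h ▸ (Finset.mem_filter.mp ht).2 : a.1 = i)).symm)
              exact congrArg (fun z => Real.exp (-(s i * z ^ 2))) harg
        _ = C e * Real.exp (-(s a.1 * (x + B e) ^ 2)) := mul_comm _ _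
    have hinner : ∀ e, ∫ x, Φ (e, x) ∂(μ.map X)
        = (Real.sqrt (1 + 2 * s a.1))⁻¹ * (C e * Real.exp (-(σ' * (B e) ^ 2))) := by
      intro e
      rw [hXlaw]
      calc ∫ x, Φ (e, x) ∂(gaussianReal 0 1)
          = ∫ x, C e * Real.exp (-(s a.1 * (x + B e) ^ 2)) ∂(gaussianReal 0 1) :=
            integral_congr_ae (Filter.Eventually.of_forall fun x => hΦfac e x)
        _ = C e * ∫ x, Real.exp (-(s a.1 * (x + B e) ^ 2)) ∂(gaussianReal 0 1) :=
            integral_const_mul _ _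
        _ = C e * ((Real.sqrt (1 + 2 * s a.1))⁻¹
              * Real.exp (-(s a.1 / (1 + 2 * s a.1)) * (B e) ^ 2)) := by
            rw [gauss_step (s a.1) (B e) hσ]
        _ = (Real.sqrt (1 + 2 * s a.1))⁻¹ * (C e * Real.exp (-(σ' * (B e) ^ 2))) := by
            rw [hσ'def, neg_mul]; ring
    set H : (((Fin m × κ) ⊕ Fin m) → ℝ) → ℝ := fun e =>
      ∏ i, Real.exp (-(s' i * (e (Sum.inr i)
        + ∑ t ∈ S'.filter (fun t => t.1 = i), e (Sum.inl t)) ^ 2)) with hHdef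
    have hCH : ∀ e, C e * Real.exp (-(σ' * (B e) ^ 2)) = H e := by
      intro e
      have h1 : Real.exp (-(σ' * (B e) ^ 2)) = Real.exp (-(s' a.1 * (e (Sum.inr a.1)
          + ∑ t ∈ S'.filter (fun t => t.1 = a.1), e (Sum.inl t)) ^ 2)) := by
        simp only [hs'def, Function.update_self, hBdef]
      have h2 : C e = ∏ i ∈ Finset.univ.erase a.1, Real.exp (-(s' i * (e (Sum.inr i)
          + ∑ t ∈ S'.filter (fun t => t.1 = i), e (Sum.inl t)) ^ 2)) := by
        rw [hCdef]
        refine Finset.prod_congr rfl fun i hi => ?_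
        rw [hs'def, Function.update_of_ne (Finset.mem_erase.mp hi).1]
      calc C e * Real.exp (-(σ' * (B e) ^ 2))
          = Real.exp (-(s' a.1 * (e (Sum.inr a.1)
              + ∑ t ∈ S'.filter (fun t => t.1 = a.1), e (Sum.inl t)) ^ 2))
            * ∏ i ∈ Finset.univ.erase a.1, Real.exp (-(s' i * (e (Sum.inr i)
              + ∑ t ∈ S'.filter (fun t => t.1 = i), e (Sum.inl t)) ^ 2)) := by
            rw [← h1, ← h2]; ring
        _ = H e := Finset.mul_prod_erase Finset.univ
            (fun i => Real.exp (-(s' i * (e (Sum.inr i)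
              + ∑ t ∈ S'.filter (fun t => t.1 = i), e (Sum.inl t)) ^ 2)))
            (Finset.mem_univ a.1)
    have hHmeas : Measurable H := by
      apply Finset.measurable_prod
      intro i _
      have hb : Measurable (fun e : ((Fin m × κ) ⊕ Fin m) → ℝ => e (Sum.inr i)
          + ∑ t ∈ S'.filter (fun t => t.1 = i), e (Sum.inl t)) :=
        (measurable_pi_apply _).add
          (Finset.measurable_sum _ fun t _ => measurable_pi_apply _)
      exact (((hb.pow_const 2).const_mul (s' i)).neg).exp
    have step2 : ∫ e, ∫ x, Φ (e, x) ∂(μ.map X) ∂(μ.map R)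
        = (Real.sqrt (1 + 2 * s a.1))⁻¹
          * ∫ ω, ∏ i, Real.exp (-(s' i * (g (Sum.inr i) ω
              + ∑ t ∈ S'.filter (fun t => t.1 = i), g (Sum.inl t) ω) ^ 2)) ∂μ := by
      have hHR : (fun ω => H (R ω)) = fun ω =>
          ∏ i, Real.exp (-(s' i * (g (Sum.inr i) ω
            + ∑ t ∈ S'.filter (fun t => t.1 = i), g (Sum.inl t) ω) ^ 2)) := by
        funext ω
        apply Finset.prod_congr rfl
        intro i _
        have harg : R ω (Sum.inr i) + ∑ t ∈ S'.filter (fun t => t.1 = i), R ω (Sum.inl t)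
            = g (Sum.inr i) ω + ∑ t ∈ S'.filter (fun t => t.1 = i), g (Sum.inl t) ω := by
          congr 1
          · simp [hRdef, hinrT i]
          · exact Finset.sum_congr rfl fun t ht => by
              simp [hRdef, hinlT t (Finset.mem_filter.mp ht).1]
        exact congrArg (fun z => Real.exp (-(s' i * z ^ 2))) harg
      calc ∫ e, ∫ x, Φ (e, x) ∂(μ.map X) ∂(μ.map R)
          = ∫ e, (Real.sqrt (1 + 2 * s a.1))⁻¹ * H e ∂(μ.map R) := by
            refine integral_congr_ae (Filter.Eventually.of_forall fun e => ?_)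
            show ∫ x, Φ (e, x) ∂(μ.map X) = (Real.sqrt (1 + 2 * s a.1))⁻¹ * H e
            rw [hinner e, hCH e]
        _ = (Real.sqrt (1 + 2 * s a.1))⁻¹ * ∫ e, H e ∂(μ.map R) := integral_const_mul _ _
        _ = (Real.sqrt (1 + 2 * s a.1))⁻¹ * ∫ ω, H (R ω) ∂μ := by
            rw [integral_map hRmeas.aemeasurable hHmeas.aestronglyMeasurable]
        _ = _ := by rw [hHR]
    have hIH := IH hgauss' s' hs'
    rw [step1, step2]
    have hsqrtnn : (0:ℝ) ≤ (Real.sqrt (1 + 2 * s a.1))⁻¹ := by positivity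
    refine le_trans (mul_le_mul_of_nonneg_left hIH hsqrtnn) (le_of_eq ?_)
    -- final algebra
    have hc : (((insert a S').filter (fun t => t.1 = a.1)).card : ℝ)
        = ((S'.filter (fun t => t.1 = a.1)).card : ℝ) + 1 := by
      rw [hfilter_at, Finset.card_insert_of_notMem hanotin]
      push_cast; ring
    have hupd : s' a.1 = σ' := by rw [hs'def, Function.update_self]
    have herase2 : ∏ i ∈ Finset.univ.erase a.1,
        (Real.sqrt (1 + 2 * s' i * ((S'.filter (fun t => t.1 = i)).card : ℝ)))⁻¹
        = ∏ i ∈ Finset.univ.erase a.1,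
        (Real.sqrt (1 + 2 * s i * (((insert a S').filter (fun t => t.1 = i)).card : ℝ)))⁻¹ := by
      refine Finset.prod_congr rfl fun i hi => ?_
      rw [hs'def, Function.update_of_ne (Finset.mem_erase.mp hi).1,
        hfilter_ne i (Finset.mem_erase.mp hi).1]
    have hmerge : (Real.sqrt (1 + 2 * s a.1))⁻¹
        * (Real.sqrt (1 + 2 * s' a.1 * ((S'.filter (fun t => t.1 = a.1)).card : ℝ)))⁻¹
        = (Real.sqrt (1 + 2 * s a.1
            * (((insert a S').filter (fun t => t.1 = a.1)).card : ℝ)))⁻¹ := by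
      rw [hupd, ← mul_inv, ← Real.sqrt_mul h2σ.le, hc]
      congr 1
      rw [hσ'def]
      field_simp
      ring
    calc (Real.sqrt (1 + 2 * s a.1))⁻¹
          * ∏ i, (Real.sqrt (1 + 2 * s' i * ((S'.filter (fun t => t.1 = i)).card : ℝ)))⁻¹
        = (Real.sqrt (1 + 2 * s a.1))⁻¹
          * ((Real.sqrt (1 + 2 * s' a.1 * ((S'.filter (fun t => t.1 = a.1)).card : ℝ)))⁻¹
            * ∏ i ∈ Finset.univ.erase a.1,
              (Real.sqrt (1 + 2 * s' i * ((S'.filter (fun t => t.1 = i)).card : ℝ)))⁻¹) := by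
          congr 1
          exact (Finset.mul_prod_erase Finset.univ
            (fun i => (Real.sqrt (1 + 2 * s' i
              * ((S'.filter (fun t => t.1 = i)).card : ℝ)))⁻¹) (Finset.mem_univ a.1)).symm
      _ = (Real.sqrt (1 + 2 * s a.1
            * (((insert a S').filter (fun t => t.1 = a.1)).card : ℝ)))⁻¹
          * ∏ i ∈ Finset.univ.erase a.1,
            (Real.sqrt (1 + 2 * s i
              * (((insert a S').filter (fun t => t.1 = i)).card : ℝ)))⁻¹ := by
          rw [← mul_assoc, hmerge, herase2]
      _ = ∏ i, (Real.sqrt (1 + 2 * s i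
            * (((insert a S').filter (fun t => t.1 = i)).card : ℝ)))⁻¹ :=
          Finset.mul_prod_erase Finset.univ
            (fun i => (Real.sqrt (1 + 2 * s i
              * (((insert a S').filter (fun t => t.1 = i)).card : ℝ)))⁻¹)
            (Finset.mem_univ a.1)

/-- support of an indicator -/
lemma sparsity_indicator {n : ℕ} (T : Finset (Fin n)) :
    sparsity (fun i => if i ∈ T then (1:ℝ) else 0) = T.card := by
  unfold sparsity
  have : Function.support (fun i => if i ∈ T then (1:ℝ) else 0) = (T : Set (Fin n)) := by
    ext i
    by_cases h : i ∈ T <;> simp [Function.mem_support, h]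
  rw [this, Set.ncard_coe_finset]

lemma sum_indicator_mul {n : ℕ} (T S0 : Finset (Fin n)) :
    ∑ i, (if i ∈ T then (1:ℝ) else 0) * (if i ∈ S0 then (1:ℝ) else 0)
      = ((T ∩ S0).card : ℝ) := by
  have h : ∀ i : Fin n, (if i ∈ T then (1:ℝ) else 0) * (if i ∈ S0 then (1:ℝ) else 0)
      = if i ∈ T ∩ S0 then (1:ℝ) else 0 := by
    intro i
    by_cases h1 : i ∈ T <;> by_cases h2 : i ∈ S0 <;> simp [h1, h2]
  rw [Finset.sum_congr rfl (fun i _ => h i)]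
  rw [Finset.sum_ite_mem, Finset.univ_inter, Finset.sum_const, nsmul_eq_mul, mul_one]

lemma mip_outer_diff {n : ℕ} (M : Fin n → Fin n → ℝ) (x y : Fin n → ℝ) :
    mip M (outer x x) - mip M (outer y y)
      = ∑ j ∈ Finset.univ ×ˢ Finset.univ,
          M j.1 j.2 * (x j.1 * x j.2 - y j.1 * y j.2) := by
  unfold mip outer
  rw [Finset.sum_product, ← Finset.sum_sub_distrib]
  refine Finset.sum_congr rfl fun p _ => ?_
  rw [← Finset.sum_sub_distrib]
  refine Finset.sum_congr rfl fun q _ => ?_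
  ring

lemma support_card_eq {n : ℕ} (T S0 : Finset (Fin n)) :
    ((Finset.univ ×ˢ Finset.univ : Finset (Fin n × Fin n)).filter (fun j =>
      (if j.1 ∈ T then (1:ℝ) else 0) * (if j.2 ∈ T then (1:ℝ) else 0)
      - (if j.1 ∈ S0 then (1:ℝ) else 0) * (if j.2 ∈ S0 then (1:ℝ) else 0) ≠ 0)).card
    + 2 * ((T ∩ S0).card) ^ 2 = T.card ^ 2 + S0.card ^ 2 := by
  classical
  have hset : ((Finset.univ ×ˢ Finset.univ : Finset (Fin n × Fin n)).filter (fun j =>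
      (if j.1 ∈ T then (1:ℝ) else 0) * (if j.2 ∈ T then (1:ℝ) else 0)
      - (if j.1 ∈ S0 then (1:ℝ) else 0) * (if j.2 ∈ S0 then (1:ℝ) else 0) ≠ 0))
      = ((T ×ˢ T) \ (S0 ×ˢ S0)) ∪ ((S0 ×ˢ S0) \ (T ×ˢ T)) := by
    ext j
    by_cases h1 : j.1 ∈ T <;> by_cases h2 : j.2 ∈ T <;>
      by_cases h3 : j.1 ∈ S0 <;> by_cases h4 : j.2 ∈ S0 <;>
      simp [Finset.mem_filter, Finset.mem_product, Finset.mem_sdiff, Finset.mem_union,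
        h1, h2, h3, h4]
  rw [hset]
  have hdisj : Disjoint ((T ×ˢ T) \ (S0 ×ˢ S0)) ((S0 ×ˢ S0) \ (T ×ˢ T)) :=
    disjoint_sdiff_sdiff
  rw [Finset.card_union_of_disjoint hdisj]
  have hI : (T ×ˢ T) ∩ (S0 ×ˢ S0) = (T ∩ S0) ×ˢ (T ∩ S0) := by
    ext j
    simp only [Finset.mem_inter, Finset.mem_product]
    tauto
  have h1 := Finset.card_sdiff_add_card_inter (T ×ˢ T) (S0 ×ˢ S0)
  have h2 := Finset.card_sdiff_add_card_inter (S0 ×ˢ S0) (T ×ˢ T)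
  rw [Finset.inter_comm] at h2
  rw [hI] at h1 h2
  have hTT : (T ×ˢ T).card = T.card ^ 2 := by rw [Finset.card_product]; ring
  have hSS : (S0 ×ˢ S0).card = S0.card ^ 2 := by rw [Finset.card_product]; ring
  have hII : ((T ∩ S0) ×ˢ (T ∩ S0)).card = (T ∩ S0).card ^ 2 := by
    rw [Finset.card_product]; ring
  rw [hTT, hII] at h1
  rw [hSS, hII] at h2
  omega


end AuxiliaryLemmas

/-- **First moment lower bound (Proposition `upperBoundOGP01`).**
With probability at least `1 − e^{−α}` (hence `1 − o_k(1)` when `α = α_k` grows faster than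
`log k`), the restricted optimum satisfies `φ_{kk′}(ℓ) ≥ Γ̃(ℓ)`. -/
theorem first_moment_lower_bound
    {Ω : Type*} [MeasurableSpace Ω] (μ : Measure Ω) [IsProbabilityMeasure μ]
    (n m k k' ℓ : ℕ) (hm : 1 ≤ m)
    (hℓk : ℓ ≤ k) (hℓk' : ℓ ≤ k') (hfeas : k' - ℓ ≤ n - k) (hkn : k ≤ n)
    (x0 : Fin n → ℝ) (hx0bin : ∀ i, x0 i = 0 ∨ x0 i = 1) (hx0sp : sparsity x0 = k)
    (A : Fin m → Ω → Fin n → Fin n → ℝ) (ε : Fin m → Ω → ℝ) (σ2 : NNReal)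
    (hA : ∀ i p q, Measure.map (fun ω => A i ω p q) μ = gaussianReal 0 1)
    (hε : ∀ i, Measure.map (ε i) μ = gaussianReal 0 σ2)
    (hindep : iIndepFun
      (Sum.elim (fun t : Fin m × Fin n × Fin n => fun ω => A t.1 ω t.2.1 t.2.2)
        (fun i : Fin m => fun ω => ε i ω)) μ)
    (α : ℝ) (hα : 0 < α) :
    (μ {ω | firstMomentCurve n k k' m α ℓ ≤
        phiVal (fun i => A i ω) (fun i => ε i ω) x0 k' ℓ}).toReal ≥ 1 - Real.exp (-α) := by
  classical
  set N : ℕ := Nat.choose k ℓ * Nat.choose (n - k) (k' - ℓ) with hNdef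
  have hN1 : 1 ≤ N := Nat.mul_pos (Nat.choose_pos hℓk) (Nat.choose_pos hfeas)
  set v : ℝ := (k' : ℝ) ^ 2 + (k : ℝ) ^ 2 - 2 * (ℓ : ℝ) ^ 2 with hvdef
  set δ : ℝ := Real.sqrt ((Real.log (N : ℝ) + α) / (m : ℝ)) with hδdef
  have hcurve : firstMomentCurve n k k' m α ℓ = Real.sqrt (v * (1 - 2 * δ)) := rfl
  have hm0 : (0 : ℝ) < m := by exact_mod_cast hm
  have hlogN : 0 ≤ Real.log (N : ℝ) := Real.log_nonneg (by exact_mod_cast hN1)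
  have hδ0 : 0 ≤ δ := Real.sqrt_nonneg _
  have hδpos : 0 < δ := Real.sqrt_pos.mpr (by positivity)
  have hδsq : δ ^ 2 = (Real.log (N : ℝ) + α) / m := Real.sq_sqrt (by positivity)
  -- the support finset of x0
  set S0 : Finset (Fin n) := Finset.univ.filter (fun i => x0 i = 1) with hS0def
  have hx0ind : ∀ i, x0 i = if i ∈ S0 then (1:ℝ) else 0 := by
    intro i
    rcases hx0bin i with h | h <;> simp [hS0def, h]
  have hS0card : S0.card = k := by
    rw [← hx0sp]
    unfold sparsity
    have : Function.support x0 = (S0 : Set (Fin n)) := by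
      ext i
      rcases hx0bin i with h | h <;> simp [Function.mem_support, hS0def, h]
    rw [this, Set.ncard_coe_finset]
  -- candidate existence
  obtain ⟨U, hU, hUcard⟩ := Finset.exists_subset_card_eq (s := S0) (n := ℓ) (by rw [hS0card]; exact hℓk)
  obtain ⟨V, hV, hVcard⟩ := Finset.exists_subset_card_eq (s := S0ᶜ) (n := k' - ℓ)
    (by rw [Finset.card_compl, hS0card, Fintype.card_fin]; exact hfeas)
  set T0 : Finset (Fin n) := U ∪ V with hT0def
  have hUV : Disjoint U V := Finset.disjoint_left.mpr
    (fun x hxU hxV => (Finset.mem_compl.mp (hV hxV)) (hU hxU))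
  have hT0card : T0.card = k' := by
    rw [hT0def, Finset.card_union_of_disjoint hUV, hUcard, hVcard]
    omega
  have hT0S0 : T0 ∩ S0 = U := by
    ext x
    simp only [hT0def, Finset.mem_inter, Finset.mem_union]
    constructor
    · rintro ⟨h1 | h1, h2⟩
      · exact h1
      · exact absurd h2 (Finset.mem_compl.mp (hV h1))
    · intro h
      exact ⟨Or.inl h, hU h⟩
  -- nonemptiness of the candidate set of phiVal at any parameters
  have hne : ∀ (Amat : Fin m → Fin n → Fin n → ℝ) (e : Fin m → ℝ),
      {r : ℝ | ∃ x : Fin n → ℝ, (∀ i, x i = 0 ∨ x i = 1) ∧ sparsity x = k' ∧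
        (∑ i, x i * x0 i) = (ℓ : ℝ) ∧
        r = Real.sqrt ((1 / (m : ℝ)) *
          ∑ i, (mip (Amat i) (outer x x) - mip (Amat i) (outer x0 x0) + e i) ^ 2)}.Nonempty := by
    intro Amat e
    refine ⟨_, ⟨fun i => if i ∈ T0 then (1:ℝ) else 0, ?_, ?_, ?_, rfl⟩⟩
    · intro i; by_cases h : i ∈ T0 <;> simp [h]
    · rw [sparsity_indicator, hT0card]
    · have : ∀ i, (if i ∈ T0 then (1:ℝ) else 0) * x0 i
          = (if i ∈ T0 then (1:ℝ) else 0) * (if i ∈ S0 then (1:ℝ) else 0) := by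
        intro i; rw [← hx0ind i]
      rw [Finset.sum_congr rfl (fun i _ => this i), sum_indicator_mul, hT0S0, hUcard]
  have hphinn : ∀ (Amat : Fin m → Fin n → Fin n → ℝ) (e : Fin m → ℝ),
      0 ≤ phiVal Amat e x0 k' ℓ := by
    intro Amat e
    refine le_csInf (hne Amat e) ?_
    rintro r ⟨x, _, _, _, rfl⟩
    exact Real.sqrt_nonneg _
  by_cases hcase : v * (1 - 2 * δ) ≤ 0
  · -- trivial case : the curve is 0
    have hcurve0 : firstMomentCurve n k k' m α ℓ = 0 := by
      rw [hcurve, Real.sqrt_eq_zero']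
      exact hcase
    have huniv : {ω | firstMomentCurve n k k' m α ℓ ≤
        phiVal (fun i => A i ω) (fun i => ε i ω) x0 k' ℓ} = Set.univ := by
      refine Set.eq_univ_iff_forall.mpr fun ω => ?_
      rw [Set.mem_setOf_eq, hcurve0]
      exact hphinn _ _
    rw [huniv, measure_univ, ENNReal.toReal_one]
    linarith [Real.exp_pos (-α)]
  · push_neg at hcase
    have hv0 : 0 ≤ v := by
      have h1 : (ℓ:ℝ) ≤ k := by exact_mod_cast hℓk
      have h2 : (ℓ:ℝ) ≤ k' := by exact_mod_cast hℓk'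
      have h3 : (0:ℝ) ≤ ℓ := by positivity
      rw [hvdef]; nlinarith
    have hvpos : 0 < v := by
      rcases lt_or_eq_of_le hv0 with h | h
      · exact h
      · exfalso; rw [← h] at hcase; simp at hcase
    have h2δ : 0 < 1 - 2 * δ := by
      by_contra h
      push_neg at h
      nlinarith
    -- measurable modifications
    have hAae : ∀ i p q, AEMeasurable (fun ω => A i ω p q) μ := by
      intro i p q
      by_contra h
      have h0 := Measure.map_of_not_aemeasurable (f := fun ω => A i ω p q) (μ := μ) h
      have h1 : gaussianReal 0 1 = (0 : Measure ℝ) := (hA i p q).symm.trans h0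
      have h2 := congrArg (fun ν : Measure ℝ => ν Set.univ) h1
      simp at h2
    have hεae : ∀ i, AEMeasurable (ε i) μ := by
      intro i
      by_contra h
      have h0 := Measure.map_of_not_aemeasurable (f := ε i) (μ := μ) h
      have h1 : gaussianReal 0 σ2 = (0 : Measure ℝ) := (hε i).symm.trans h0
      have h2 := congrArg (fun ν : Measure ℝ => ν Set.univ) h1
      simp at h2
    set A' : Fin m → Fin n → Fin n → Ω → ℝ := fun i p q => (hAae i p q).mk _ with hA'def
    set ε' : Fin m → Ω → ℝ := fun i => (hεae i).mk _ with hε'def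
    have hA'meas : ∀ i p q, Measurable (A' i p q) := fun i p q => (hAae i p q).measurable_mk
    have hε'meas : ∀ i, Measurable (ε' i) := fun i => (hεae i).measurable_mk
    have hA'ae : ∀ i p q, (fun ω => A i ω p q) =ᵐ[μ] A' i p q := fun i p q => (hAae i p q).ae_eq_mk
    have hε'ae : ∀ i, ε i =ᵐ[μ] ε' i := fun i => (hεae i).ae_eq_mk
    set f0 : (Fin m × Fin n × Fin n) ⊕ Fin m → Ω → ℝ :=
      Sum.elim (fun t : Fin m × Fin n × Fin n => fun ω => A t.1 ω t.2.1 t.2.2)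
        (fun i : Fin m => fun ω => ε i ω) with hf0def
    set f' : (Fin m × Fin n × Fin n) ⊕ Fin m → Ω → ℝ :=
      Sum.elim (fun t : Fin m × Fin n × Fin n => A' t.1 t.2.1 t.2.2)
        (fun i : Fin m => ε' i) with hf'def
    have hf'meas : ∀ t, Measurable (f' t) := by
      rintro (⟨i, p, q⟩ | i)
      · exact hA'meas i p q
      · exact hε'meas i
    have hf'ae : ∀ t, f0 t =ᵐ[μ] f' t := by
      rintro (⟨i, p, q⟩ | i)
      · exact hA'ae i p q
      · exact hε'ae i
    have hae_all : ∀ᵐ ω ∂μ, ∀ t, f0 t ω = f' t ω := ae_all_iff.mpr hf'ae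
    have hindep' : iIndepFun f' μ := by
      rw [iIndepFun_iff_measure_inter_preimage_eq_mul]
      have h0 := iIndepFun_iff_measure_inter_preimage_eq_mul.mp hindep
      intro S sets hsets
      have hpre : ∀ t (s : Set ℝ), (f' t ⁻¹' s : Set Ω) =ᵐ[μ] (f0 t ⁻¹' s) := by
        intro t s
        filter_upwards [hf'ae t] with ω hω
        change (f' t ω ∈ s) = (f0 t ω ∈ s)
        rw [hω]
      have hbig : (⋂ i ∈ S, f' i ⁻¹' sets i : Set Ω) =ᵐ[μ] (⋂ i ∈ S, f0 i ⁻¹' sets i) := by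
        filter_upwards [hae_all] with ω hω
        change (ω ∈ ⋂ i ∈ S, f' i ⁻¹' sets i) = (ω ∈ ⋂ i ∈ S, f0 i ⁻¹' sets i)
        simp only [Set.mem_iInter, Set.mem_preimage, hω]
      rw [measure_congr hbig, h0 S hsets]
      exact Finset.prod_congr rfl fun i _ => (measure_congr (hpre i (sets i))).symm
    have hA'law : ∀ i p q, Measure.map (A' i p q) μ = gaussianReal 0 1 := fun i p q => by
      rw [← Measure.map_congr (hA'ae i p q)]
      exact hA i p q
    -- candidate structures
    set cfun : Finset (Fin n) → Fin n × Fin n → ℝ := fun T j =>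
      (if j.1 ∈ T then (1:ℝ) else 0) * (if j.2 ∈ T then (1:ℝ) else 0) - x0 j.1 * x0 j.2
      with hcdef
    set Jf : Finset (Fin n) → Finset (Fin n × Fin n) := fun T =>
      (Finset.univ ×ˢ Finset.univ).filter (fun j => cfun T j ≠ 0) with hJdef
    set 𝒯 : Finset (Finset (Fin n)) :=
      (Finset.univ.powersetCard k').filter (fun T => (T ∩ S0).card = ℓ) with h𝒯def
    have h𝒯mem : ∀ T ∈ 𝒯, T.card = k' ∧ (T ∩ S0).card = ℓ := by
      intro T hT
      rw [h𝒯def, Finset.mem_filter, Finset.mem_powersetCard] at hT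
      exact ⟨hT.1.2, hT.2⟩
    have hJcard : ∀ T ∈ 𝒯, ((Jf T).card : ℝ) = v := by
      intro T hT
      obtain ⟨hTc, hTov⟩ := h𝒯mem T hT
      have hfilteq : Jf T = (Finset.univ ×ˢ Finset.univ : Finset (Fin n × Fin n)).filter (fun j =>
          (if j.1 ∈ T then (1:ℝ) else 0) * (if j.2 ∈ T then (1:ℝ) else 0)
          - (if j.1 ∈ S0 then (1:ℝ) else 0) * (if j.2 ∈ S0 then (1:ℝ) else 0) ≠ 0) := by
        rw [hJdef]
        refine Finset.filter_congr fun j _ => ?_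
        rw [hcdef]
        rw [← hx0ind j.1, ← hx0ind j.2]
      have hcard := support_card_eq T S0
      rw [← hfilteq] at hcard
      rw [hTc, hS0card] at hcard
      have hc2 : ((Jf T).card : ℝ) + 2 * ((T ∩ S0).card : ℝ) ^ 2 = (k':ℝ)^2 + (k:ℝ)^2 := by
        exact_mod_cast congrArg (fun z : ℕ => (z : ℝ)) hcard
      rw [hTov] at hc2
      rw [hvdef]
      linarith
    have hcpm : ∀ T j, cfun T j ≠ 0 → cfun T j = 1 ∨ cfun T j = -1 := by
      intro T j h
      rw [hcdef] at h ⊢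
      rcases hx0bin j.1 with h1 | h1 <;> rcases hx0bin j.2 with h2 | h2 <;>
        by_cases h3 : j.1 ∈ T <;> by_cases h4 : j.2 ∈ T <;>
        simp [h1, h2, h3, h4] at h ⊢
    -- counting
    have h𝒯card : 𝒯.card ≤ N := by
      have hinj : ∀ T1 ∈ 𝒯, ∀ T2 ∈ 𝒯, (T1 ∩ S0, T1 \ S0) = (T2 ∩ S0, T2 \ S0) → T1 = T2 := by
        intro T1 _ T2 _ h
        have h1 := congrArg Prod.fst h
        have h2 := congrArg Prod.snd h
        simp only at h1 h2
        have e1 : T1 ∩ S0 ∪ T1 \ S0 = T1 := by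
          rw [← Finset.sup_eq_union, ← Finset.inf_eq_inter]; exact sup_inf_sdiff T1 S0
        have e2 : T2 ∩ S0 ∪ T2 \ S0 = T2 := by
          rw [← Finset.sup_eq_union, ← Finset.inf_eq_inter]; exact sup_inf_sdiff T2 S0
        rw [← e1, ← e2, h1, h2]
      have hmaps : ∀ T ∈ 𝒯, (T ∩ S0, T \ S0) ∈
          (S0.powersetCard ℓ) ×ˢ (S0ᶜ.powersetCard (k' - ℓ)) := by
        intro T hT
        obtain ⟨hTc, hTov⟩ := h𝒯mem T hT
        rw [Finset.mem_product]
        constructor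
        · rw [Finset.mem_powersetCard]
          exact ⟨Finset.inter_subset_right, hTov⟩
        · rw [Finset.mem_powersetCard]
          refine ⟨?_, ?_⟩
          · intro x hx
            rw [Finset.mem_sdiff] at hx
            exact Finset.mem_compl.mpr hx.2
          · show (T \ S0).card = k' - ℓ
            have h5 := Finset.card_sdiff_add_card_inter T S0
            omega
      have := Finset.card_le_card_of_injOn (fun T => (T ∩ S0, T \ S0))
        (fun T hT => hmaps T hT) (fun T1 h1 T2 h2 h => hinj T1 h1 T2 h2 h)
      calc 𝒯.card ≤ ((S0.powersetCard ℓ) ×ˢ (S0ᶜ.powersetCard (k' - ℓ))).card := this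
        _ = N := by
          rw [Finset.card_product, Finset.card_powersetCard, Finset.card_powersetCard,
            Finset.card_compl, hS0card, Fintype.card_fin, hNdef]
    -- Chernoff parameters
    set s0 : ℝ := δ / (v * (1 - 2 * δ)) with hs0def
    have hvd : 0 < v * (1 - 2 * δ) := hcase
    have hs0pos : 0 < s0 := div_pos hδpos hvd
    set Tv : ℝ := m * (v * (1 - 2 * δ)) with hTvdef
    set Rres : Finset (Fin n) → Fin m → Ω → ℝ := fun T i ω =>
      ε' i ω + ∑ j ∈ Jf T, cfun T j * A' i j.1 j.2 ω with hRdef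
    have hRmeas : ∀ T i, Measurable (Rres T i) := by
      intro T i
      apply (hε'meas i).add
      apply Finset.measurable_sum
      intro j _
      exact (hA'meas i j.1 j.2).const_mul _
    set Bad : Finset (Fin n) → Set Ω := fun T => {ω | ∑ i, (Rres T i ω) ^ 2 ≤ Tv} with hBaddef
    have hperT : ∀ T ∈ 𝒯, (μ (Bad T)).toReal ≤ Real.exp (-(Real.log (N:ℝ) + α)) := by
      intro T hT
      set gT : (Fin m × (Fin n × Fin n)) ⊕ Fin m → Ω → ℝ := fun t =>
        (Sum.elim (fun t : Fin m × Fin n × Fin n => fun x : ℝ => cfun T t.2 * x)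
          (fun _ : Fin m => id) t) ∘ f' t with hgTdef
      have hgmeas : ∀ t, Measurable (gT t) := by
        rintro (⟨i, j⟩ | i)
        · exact (hf'meas (Sum.inl (i, j))).const_mul _
        · exact hf'meas (Sum.inr i)
      have hgindep : iIndepFun gT μ := by
        apply hindep'.comp
        rintro (⟨i, j⟩ | i)
        · exact measurable_id.const_mul _
        · exact measurable_id
      have hggauss : ∀ t ∈ (Finset.univ ×ˢ Jf T : Finset (Fin m × (Fin n × Fin n))),
          Measure.map (gT (Sum.inl t)) μ = gaussianReal 0 1 := by
        rintro ⟨i, j⟩ ht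
        rw [Finset.mem_product] at ht
        have hc0 : cfun T j ≠ 0 := by
          have h6 := ht.2
          rw [hJdef, Finset.mem_filter] at h6
          exact h6.2
        have hmm : Measure.map (gT (Sum.inl (i, j))) μ
            = Measure.map ((cfun T j * ·) ∘ (A' i j.1 j.2)) μ := rfl
        have hcm : Measurable (cfun T j * ·) := measurable_id.const_mul _
        rw [hmm, ← Measure.map_map hcm (hA'meas i j.1 j.2),
          hA'law i j.1 j.2, gaussianReal_map_const_mul]
        rcases hcpm T j hc0 with h | h
        · rw [h]; norm_num
        · rw [h]; norm_num
      have hkey := key_bound μ gT hgmeas hgindep (Finset.univ ×ˢ Jf T) hggauss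
        (fun _ => s0) (fun _ => hs0pos.le)
      have hfil : ∀ i : Fin m, ((Finset.univ ×ˢ Jf T).filter (fun t => t.1 = i))
          = {i} ×ˢ Jf T := by
        intro i
        ext t
        simp only [Finset.mem_filter, Finset.mem_product, Finset.mem_singleton, Finset.mem_univ,
          true_and]
        tauto
      have hsum : ∀ (i : Fin m) (ω : Ω), gT (Sum.inr i) ω
          + ∑ t ∈ ((Finset.univ ×ˢ Jf T).filter (fun t => t.1 = i)), gT (Sum.inl t) ω
          = Rres T i ω := by
        intro i ω
        rw [hfil i, Finset.sum_product, Finset.sum_singleton]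
        rfl
      have hint_eq : (fun ω => ∏ i, Real.exp (-(s0 * (gT (Sum.inr i) ω
            + ∑ t ∈ ((Finset.univ ×ˢ Jf T).filter (fun t => t.1 = i)),
              gT (Sum.inl t) ω) ^ 2)))
          = fun ω => Real.exp (s0 * (-(∑ i, (Rres T i ω) ^ 2))) := by
        funext ω
        calc ∏ i, Real.exp (-(s0 * (gT (Sum.inr i) ω
              + ∑ t ∈ ((Finset.univ ×ˢ Jf T).filter (fun t => t.1 = i)),
                gT (Sum.inl t) ω) ^ 2))
            = ∏ i, Real.exp (-(s0 * (Rres T i ω) ^ 2)) :=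
              Finset.prod_congr rfl fun i _ => by rw [hsum i ω]
          _ = Real.exp (∑ i, -(s0 * (Rres T i ω) ^ 2)) := (Real.exp_sum _ _).symm
          _ = Real.exp (s0 * (-(∑ i, (Rres T i ω) ^ 2))) := by
              congr 1
              rw [Finset.sum_neg_distrib, ← Finset.mul_sum]
              ring
      have hXmeas : Measurable (fun ω => -(∑ i, (Rres T i ω) ^ 2)) :=
        (Finset.measurable_sum Finset.univ (fun i _ => (hRmeas T i).pow_const 2)).neg
      have hXint : Integrable (fun ω => Real.exp (s0 * (-(∑ i, (Rres T i ω) ^ 2)))) μ := by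
        apply integrable_of_bounded_meas (C := 1) (hXmeas.const_mul s0).exp
        intro ω
        rw [Real.norm_eq_abs, abs_of_nonneg (Real.exp_pos _).le, Real.exp_le_one_iff]
        have h7 : (0:ℝ) ≤ ∑ i, (Rres T i ω) ^ 2 :=
          Finset.sum_nonneg fun i _ => sq_nonneg _
        nlinarith
      have hcher := measure_ge_le_exp_mul_mgf
        (X := fun ω => -(∑ i, (Rres T i ω) ^ 2)) (μ := μ) (t := s0) (-Tv) hs0pos.le hXint
      have hseteq : {ω : Ω | -Tv ≤ -(∑ i, (Rres T i ω) ^ 2)} = Bad T := by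
        ext ω
        simp only [hBaddef, Set.mem_setOf_eq, neg_le_neg_iff]
      have hmgf : mgf (fun ω => -(∑ i, (Rres T i ω) ^ 2)) μ s0
          ≤ ((Real.sqrt (1 + 2 * s0 * v))⁻¹) ^ m := by
        calc mgf (fun ω => -(∑ i, (Rres T i ω) ^ 2)) μ s0
            = ∫ ω, Real.exp (s0 * (-(∑ i, (Rres T i ω) ^ 2))) ∂μ := rfl
          _ = ∫ ω, ∏ i, Real.exp (-(s0 * (gT (Sum.inr i) ω
                + ∑ t ∈ ((Finset.univ ×ˢ Jf T).filter (fun t => t.1 = i)),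
                  gT (Sum.inl t) ω) ^ 2)) ∂μ := by rw [hint_eq]
          _ ≤ ∏ i : Fin m, (Real.sqrt (1 + 2 * s0
                * (((Finset.univ ×ˢ Jf T).filter (fun t => t.1 = i)).card : ℝ)))⁻¹ := hkey
          _ = ((Real.sqrt (1 + 2 * s0 * v))⁻¹) ^ m := by
              rw [Finset.prod_congr rfl (fun i (_ : i ∈ Finset.univ) => by
                rw [hfil i, Finset.card_product, Finset.card_singleton, one_mul, hJcard T hT]),
                Finset.prod_const, Finset.card_univ, Fintype.card_fin]
      have hsv : s0 * v = δ / (1 - 2 * δ) := by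
        rw [hs0def]
        field_simp [hvpos.ne', h2δ.ne']
      have hval : 1 + 2 * s0 * v = (1 - 2 * δ)⁻¹ := by
        rw [mul_assoc, hsv]
        field_simp [h2δ.ne']
        ring
      have hs0Tv : -s0 * -Tv = m * δ := by
        rw [hs0def, hTvdef, neg_mul_neg, div_mul_eq_mul_div, div_eq_iff hvd.ne']
        ring
      have hsqrt_eq : ((Real.sqrt (1 + 2 * s0 * v))⁻¹) ^ m
          = Real.exp ((m : ℝ) * (Real.log (1 - 2 * δ) / 2)) := by
        rw [hval, Real.sqrt_inv, inv_inv]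
        have hpos : 0 < Real.sqrt (1 - 2 * δ) := Real.sqrt_pos.mpr h2δ
        rw [← Real.exp_log (pow_pos hpos m), Real.log_pow, Real.log_sqrt h2δ.le]
      have hlogle := log_one_sub_le (by positivity : (0:ℝ) ≤ 2 * δ) (by linarith : 2 * δ < 1)
      have hδ2 : (m : ℝ) * δ ^ 2 = Real.log (N : ℝ) + α := by
        rw [hδsq]
        field_simp
      have hfinal : Real.exp (-s0 * -Tv) * ((Real.sqrt (1 + 2 * s0 * v))⁻¹) ^ m
          ≤ Real.exp (-(Real.log (N : ℝ) + α)) := by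
        rw [hs0Tv, hsqrt_eq, ← Real.exp_add]
        apply Real.exp_le_exp.mpr
        nlinarith [mul_le_mul_of_nonneg_left hlogle (by positivity : (0:ℝ) ≤ (m:ℝ) / 2)]
      calc (μ (Bad T)).toReal
          = (μ {ω : Ω | -Tv ≤ -(∑ i, (Rres T i ω) ^ 2)}).toReal := by rw [hseteq]
        _ ≤ Real.exp (-s0 * -Tv) * mgf (fun ω => -(∑ i, (Rres T i ω) ^ 2)) μ s0 := hcher
        _ ≤ Real.exp (-s0 * -Tv) * ((Real.sqrt (1 + 2 * s0 * v))⁻¹) ^ m :=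
            mul_le_mul_of_nonneg_left hmgf (Real.exp_pos _).le
        _ ≤ Real.exp (-(Real.log (N : ℝ) + α)) := hfinal
    -- inclusion of the bad event in the union of per-candidate events
    set Good : Set Ω := {ω | firstMomentCurve n k k' m α ℓ ≤
        phiVal (fun i p q => A' i p q ω) (fun i => ε' i ω) x0 k' ℓ} with hGooddef
    have hincl : Goodᶜ ⊆ ⋃ T ∈ 𝒯, Bad T := by
      intro ω hω
      rw [Set.mem_compl_iff, hGooddef, Set.mem_setOf_eq, not_le] at hω
      have hr : ∃ r ∈ {r : ℝ | ∃ x : Fin n → ℝ, (∀ i, x i = 0 ∨ x i = 1) ∧ sparsity x = k' ∧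
          (∑ i, x i * x0 i) = (ℓ : ℝ) ∧
          r = Real.sqrt ((1 / (m : ℝ)) *
            ∑ i, (mip ((fun i p q => A' i p q ω) i) (outer x x)
              - mip ((fun i p q => A' i p q ω) i) (outer x0 x0) + ε' i ω) ^ 2)},
          r < firstMomentCurve n k k' m α ℓ := by
        by_contra hcon
        push_neg at hcon
        exact absurd (le_csInf (hne (fun i p q => A' i p q ω) (fun i => ε' i ω)) hcon)
          (not_le.mpr hω)
      obtain ⟨r, ⟨x, hxbin, hxsp, hxov, hreq⟩, hrlt⟩ := hr
      set T : Finset (Fin n) := Finset.univ.filter (fun i => x i = 1) with hTdef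
      have hxind : x = fun i => if i ∈ T then (1:ℝ) else 0 := by
        funext i
        rcases hxbin i with h | h <;> simp [hTdef, h]
      have hTcard : T.card = k' := by
        rw [hxind, sparsity_indicator] at hxsp
        exact hxsp
      have hTov : (T ∩ S0).card = ℓ := by
        rw [hxind] at hxov
        have h8 : ∑ i, (if i ∈ T then (1:ℝ) else 0) * x0 i = ((T ∩ S0).card : ℝ) := by
          rw [Finset.sum_congr rfl (fun i _ => by rw [hx0ind i]), sum_indicator_mul]
        rw [h8] at hxov
        exact_mod_cast hxov
      have hT𝒯 : T ∈ 𝒯 := by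
        rw [h𝒯def, Finset.mem_filter, Finset.mem_powersetCard]
        exact ⟨⟨Finset.subset_univ T, hTcard⟩, hTov⟩
      have hres : ∀ i, mip ((fun i p q => A' i p q ω) i) (outer x x)
          - mip ((fun i p q => A' i p q ω) i) (outer x0 x0) + ε' i ω = Rres T i ω := by
        intro i
        rw [mip_outer_diff]
        have h9 : ∀ j : Fin n × Fin n,
            A' i j.1 j.2 ω * (x j.1 * x j.2 - x0 j.1 * x0 j.2)
            = A' i j.1 j.2 ω * cfun T j := by
          intro j
          rw [hcdef, hxind]
        rw [Finset.sum_congr rfl (fun j _ => h9 j)]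
        have hz : ∀ j ∈ (Finset.univ ×ˢ Finset.univ : Finset (Fin n × Fin n)),
            j ∉ Jf T → A' i j.1 j.2 ω * cfun T j = 0 := by
          intro j hj hnj
          rw [hJdef, Finset.mem_filter] at hnj
          push_neg at hnj
          rw [hnj hj, mul_zero]
        have hsubJ : Jf T ⊆ (Finset.univ ×ˢ Finset.univ : Finset (Fin n × Fin n)) := by
          rw [hJdef]; exact Finset.filter_subset _ _
        rw [← Finset.sum_subset hsubJ hz,
          Finset.sum_congr rfl (fun j _ => mul_comm (A' i j.1 j.2 ω) (cfun T j)), hRdef]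
        exact add_comm _ _
      have hrR : r = Real.sqrt ((1 / (m : ℝ)) * ∑ i, (Rres T i ω) ^ 2) := by
        rw [hreq, Finset.sum_congr rfl (fun i _ => by rw [hres i])]
      have hlt : (1 / (m : ℝ)) * ∑ i, (Rres T i ω) ^ 2 < v * (1 - 2 * δ) := by
        by_contra hge
        push_neg at hge
        have := Real.sqrt_le_sqrt hge
        rw [← hrR, ← hcurve] at this
        exact absurd hrlt (not_lt.mpr this)
      refine Set.mem_biUnion hT𝒯 ?_
      show ∑ i, (Rres T i ω) ^ 2 ≤ Tv
      have h11 : ∑ i, (Rres T i ω) ^ 2 = (m : ℝ) * ((1 / (m : ℝ)) * ∑ i, (Rres T i ω) ^ 2) := by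
        field_simp
      rw [h11, hTvdef]
      exact le_of_lt (mul_lt_mul_of_pos_left hlt hm0)
    -- union bound
    have hNpos : (0:ℝ) < N := by exact_mod_cast Nat.lt_of_lt_of_le Nat.zero_lt_one hN1
    have hBadub : μ Goodᶜ ≤ ENNReal.ofReal (Real.exp (-α)) := by
      calc μ Goodᶜ ≤ μ (⋃ T ∈ 𝒯, Bad T) := measure_mono hincl
        _ ≤ ∑ T ∈ 𝒯, μ (Bad T) := measure_biUnion_finset_le 𝒯 Bad
        _ ≤ ∑ _T ∈ 𝒯, ENNReal.ofReal (Real.exp (-(Real.log (N:ℝ) + α))) :=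
            Finset.sum_le_sum fun T hT =>
              (ENNReal.le_ofReal_iff_toReal_le (measure_ne_top μ _)
                (Real.exp_pos _).le).mpr (hperT T hT)
        _ = (𝒯.card : ENNReal) * ENNReal.ofReal (Real.exp (-(Real.log (N:ℝ) + α))) := by
            rw [Finset.sum_const, nsmul_eq_mul]
        _ ≤ (N : ENNReal) * ENNReal.ofReal (Real.exp (-(Real.log (N:ℝ) + α))) := by
            apply mul_le_mul_left
            exact_mod_cast Nat.cast_le.mpr h𝒯card
        _ = ENNReal.ofReal ((N : ℝ) * Real.exp (-(Real.log (N:ℝ) + α))) := by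
            rw [ENNReal.ofReal_mul (by positivity), ENNReal.ofReal_natCast]
        _ = ENNReal.ofReal (Real.exp (-α)) := by
            congr 1
            rw [neg_add, Real.exp_add, Real.exp_neg, Real.exp_log hNpos]
            field_simp
    have hGoodTo : 1 - Real.exp (-α) ≤ (μ Good).toReal := by
      have hsum : (1 : ENNReal) ≤ μ Good + μ Goodᶜ := by
        calc (1:ENNReal) = μ Set.univ := (measure_univ (μ := μ)).symm
          _ = μ (Good ∪ Goodᶜ) := by rw [Set.union_compl_self]
          _ ≤ μ Good + μ Goodᶜ := measure_union_le _ _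
      have hne1 : μ Good + μ Goodᶜ ≠ ⊤ :=
        ENNReal.add_ne_top.mpr ⟨measure_ne_top _ _, measure_ne_top _ _⟩
      have h1 := ENNReal.toReal_mono hne1 hsum
      rw [ENNReal.toReal_one, ENNReal.toReal_add (measure_ne_top _ _) (measure_ne_top _ _)] at h1
      have h2 : (μ Goodᶜ).toReal ≤ Real.exp (-α) :=
        ENNReal.toReal_le_of_le_ofReal (Real.exp_pos _).le hBadub
      linarith
    -- transfer from the modifications back to A, ε
    set agree : Set Ω := {ω | ∀ t, f0 t ω = f' t ω} with hagreedef
    have hagree0 : μ agreeᶜ = 0 := by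
      rw [hagreedef, Set.compl_setOf]
      exact ae_iff.mp hae_all
    have hsub2 : Good ∩ agree ⊆ {ω | firstMomentCurve n k k' m α ℓ ≤
        phiVal (fun i => A i ω) (fun i => ε i ω) x0 k' ℓ} := by
      rintro ω ⟨hg, hag⟩
      rw [hGooddef, Set.mem_setOf_eq] at hg
      rw [Set.mem_setOf_eq]
      have hAeq : (fun i => A i ω) = (fun i p q => A' i p q ω) := by
        funext i p q
        exact hag (Sum.inl (i, p, q))
      have hεeq : (fun i => ε i ω) = (fun i => ε' i ω) := by
        funext i
        exact hag (Sum.inr i)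
      rw [hAeq, hεeq]
      exact hg
    have hμle : μ Good ≤ μ {ω | firstMomentCurve n k k' m α ℓ ≤
        phiVal (fun i => A i ω) (fun i => ε i ω) x0 k' ℓ} := by
      calc μ Good ≤ μ ((Good ∩ agree) ∪ agreeᶜ) := measure_mono (by
            intro ω h
            by_cases ha : ω ∈ agree
            · exact Or.inl ⟨h, ha⟩
            · exact Or.inr ha)
        _ ≤ μ (Good ∩ agree) + μ agreeᶜ := measure_union_le _ _
        _ = μ (Good ∩ agree) := by rw [hagree0, add_zero]
        _ ≤ _ := measure_mono hsub2
    have hfin := ENNReal.toReal_mono (measure_ne_top μ _) hμle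
    rw [ge_iff_le]
    linarith
end
end

section
/- Let x0 ∈ ℝⁿ be k-sparse with its largest-magnitude entry at index 1 (so x0[1]² = ‖x0‖_∞²), let A_1,…,A_m be i.i.d. standard Gaussian n×n matrices and b_i = ⟨A_i, x0 x0ᵀ⟩. Define ŷ = (1/m)Σ_i b_i (A_i)_{*1} (the first columns of the A_i) and the support estimate Ŝ = {ℓ : |ŷ[ℓ]| > C√(log(m)/m)·‖x0‖²} for a sufficiently large absolute constant C. Then with probability 1 − o_m(1): (i) Ŝ ⊆ supp(x0); and (ii) the missed mass satisfies ‖(x0)_{Ŝᶜ}‖₂ ≤ μ0^{-1} ‖x0‖² √(k log(m)/m), where μ0 = ‖x0‖_∞/‖x0‖₂. -/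
open MeasureTheory ProbabilityTheory Filter Finset

noncomputable section

/-- Euclidean norm. -/
def vnorm {n : ℕ} (x : Fin n → ℝ) : ℝ := Real.sqrt (∑ i, x i ^ 2)

/-- Sup norm. -/
def vnormInf {n : ℕ} (x : Fin n → ℝ) : ℝ := ⨆ i, |x i|

open Real
open scoped ENNReal NNReal



lemma gauss_toReal_pdf (x : ℝ) :
    (gaussianPDF 0 1 x).toReal = gaussianPDFReal 0 1 x :=
  ENNReal.toReal_ofReal (gaussianPDFReal_nonneg 0 1 x)

lemma gauss_integrable_pow (p : ℕ) :
    Integrable (fun x : ℝ => x ^ p) (gaussianReal 0 1) := by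
  rw [gaussianReal_of_var_ne_zero 0 one_ne_zero,
    integrable_withDensity_iff (measurable_gaussianPDF 0 1)
      (ae_of_all _ fun x => ENNReal.ofReal_lt_top)]
  have hbase : Integrable (fun x : ℝ => x ^ (p : ℝ) * Real.exp (-(2⁻¹ : ℝ) * x ^ 2)) :=
    integrable_rpow_mul_exp_neg_mul_sq (by norm_num) (by exact lt_of_lt_of_le neg_one_lt_zero (Nat.cast_nonneg p))
  rw [show (fun x : ℝ => x ^ (p : ℝ) * Real.exp (-(2⁻¹:ℝ) * x ^ 2))
      = fun x : ℝ => x ^ p * Real.exp (-(2⁻¹:ℝ) * x ^ 2) by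
    funext x; rw [Real.rpow_natCast]] at hbase
  refine (hbase.const_mul ((Real.sqrt (2 * π))⁻¹)).congr ?_
  refine ae_of_all _ fun x => ?_
  simp only [gauss_toReal_pdf, gaussianPDFReal]
  push_cast
  rw [mul_one, mul_one, sub_zero]
  ring_nf

lemma gauss_pdfReal_even (x : ℝ) : gaussianPDFReal 0 1 (-x) = gaussianPDFReal 0 1 x := by
  simp only [gaussianPDFReal]
  ring_nf

lemma gauss_withDensity_nnreal :
    gaussianReal 0 1 = volume.withDensity
      (fun x => ((gaussianPDFReal 0 1 x).toNNReal : ℝ≥0∞)) :=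
  gaussianReal_of_var_ne_zero 0 one_ne_zero

lemma gauss_integral_id : ∫ x, x ∂(gaussianReal 0 1) = 0 := by
  rw [gauss_withDensity_nnreal,
    integral_withDensity_eq_integral_smul
      ((measurable_gaussianPDFReal 0 1).real_toNNReal)]
  have h2 : ∀ x : ℝ, ((gaussianPDFReal 0 1 x).toNNReal : ℝ≥0) • x
      = gaussianPDFReal 0 1 x * x := by
    intro x
    rw [NNReal.smul_def, smul_eq_mul, Real.coe_toNNReal _ (gaussianPDFReal_nonneg 0 1 x)]
  simp only [h2]
  have h : ∫ x : ℝ, gaussianPDFReal 0 1 (-x) * (-x) =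
      ∫ x : ℝ, gaussianPDFReal 0 1 x * x := integral_neg_eq_self (fun x => gaussianPDFReal 0 1 x * x) volume
  have h3 : ∀ x : ℝ, gaussianPDFReal 0 1 (-x) * (-x)
      = -(gaussianPDFReal 0 1 x * x) := by
    intro x; rw [gauss_pdfReal_even]; ring
  simp only [h3, integral_neg] at h
  linarith

/-- second moment of the standard gaussian -/
def gm2 : ℝ := ∫ x, x ^ 2 ∂(gaussianReal 0 1)

/-- fourth moment of the standard gaussian -/
def gm4 : ℝ := ∫ x, x ^ 4 ∂(gaussianReal 0 1)

lemma gm2_pos : 0 < gm2 := by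
  rcases lt_or_eq_of_le (integral_nonneg (fun x : ℝ => sq_nonneg x) :
    (0:ℝ) ≤ ∫ x, x ^ 2 ∂(gaussianReal 0 1)) with h | h
  · exact h
  exfalso
  have h0 : (fun x : ℝ => x ^ 2) =ᵐ[gaussianReal 0 1] 0 := by
    rw [← integral_eq_zero_iff_of_nonneg (fun x : ℝ => sq_nonneg x) (gauss_integrable_pow 2)]
    exact h.symm
  have h1 : (gaussianReal 0 1) {x : ℝ | x ≠ 0} = 0 := by
    have := h0
    rw [Filter.EventuallyEq, ae_iff] at this
    refine le_antisymm (le_trans (measure_mono ?_) this.le) zero_le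
    intro x hx
    simp only [Set.mem_setOf_eq, Pi.zero_apply] at *
    exact fun hc => hx (by simpa using pow_eq_zero_iff (n := 2) (by norm_num) |>.mp hc)
  have h2 : (gaussianReal 0 1) {(0:ℝ)} = 0 :=
    gaussianReal_absolutelyContinuous 0 one_ne_zero (measure_singleton 0)
  have h3 : (gaussianReal 0 1) Set.univ = 1 := measure_univ
  have : (gaussianReal 0 1) Set.univ ≤ 0 := by
    calc (gaussianReal 0 1) Set.univ
        ≤ (gaussianReal 0 1) {(0:ℝ)} + (gaussianReal 0 1) {x : ℝ | x ≠ 0} := by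
          refine le_trans (measure_mono ?_) (measure_union_le _ _)
          intro x _
          by_cases hx : x = 0
          · exact Or.inl hx
          · exact Or.inr hx
      _ = 0 := by rw [h1, h2, add_zero]
  rw [h3] at this
  exact absurd this (by norm_num)

lemma gm4_nonneg : 0 ≤ gm4 :=
  integral_nonneg fun x : ℝ => by positivity

section transfer

variable {Ω : Type} [MeasurableSpace Ω] {μ : Measure Ω} [IsProbabilityMeasure μ]
variable {X : Ω → ℝ}

lemma measurable_pow_const' (p : ℕ) : Measurable fun x : ℝ => x ^ p := by fun_prop

lemma gaussX_integrable_pow (hX : Measurable X)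
    (hmap : Measure.map X μ = gaussianReal 0 1) (p : ℕ) :
    Integrable (fun ω => X ω ^ p) μ := by
  have h := (integrable_map_measure (μ := μ)
    (g := fun x : ℝ => x ^ p) (f := X)
    ((measurable_pow_const' p).aestronglyMeasurable) hX.aemeasurable)
  rw [hmap] at h
  exact h.mp (gauss_integrable_pow p)

lemma gaussX_integral_pow (hX : Measurable X)
    (hmap : Measure.map X μ = gaussianReal 0 1) (p : ℕ) :
    ∫ ω, X ω ^ p ∂μ = ∫ x, x ^ p ∂(gaussianReal 0 1) := by
  rw [← hmap, integral_map (μ := μ) hX.aemeasurable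
    ((measurable_pow_const' p).aestronglyMeasurable)]

lemma gaussX_integral_id (hX : Measurable X)
    (hmap : Measure.map X μ = gaussianReal 0 1) :
    ∫ ω, X ω ∂μ = 0 := by
  have h := gaussX_integral_pow hX hmap 1
  simp only [pow_one] at h
  rw [h, gauss_integral_id]

end transfer

section cheby

variable {Ω : Type} [MeasurableSpace Ω] {μ : Measure Ω} [IsProbabilityMeasure μ]

lemma chebyshev_sum (W : ℕ → Ω → ℝ) (a V s : ℝ) (m : ℕ) (hm : 0 < m) (hs : 0 < s)
    (hint : ∀ i ∈ Finset.range m, ∀ j ∈ Finset.range m,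
      Integrable (fun ω => (W i ω - a) * (W j ω - a)) μ)
    (hvar : ∀ i ∈ Finset.range m, ∫ ω, (W i ω - a) * (W i ω - a) ∂μ ≤ V)
    (hcross : ∀ i ∈ Finset.range m, ∀ j ∈ Finset.range m, i ≠ j →
      ∫ ω, (W i ω - a) * (W j ω - a) ∂μ = 0) :
    (μ {ω | s < |(1 / (m:ℝ)) * (∑ i ∈ Finset.range m, W i ω) - a|}).toReal
      ≤ V / (m * s ^ 2) := by
  have hmR : (0:ℝ) < m := Nat.cast_pos.mpr hm
  set T : Ω → ℝ := fun ω => ∑ i ∈ Finset.range m, (W i ω - a)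
  have hTsq : ∀ ω, T ω ^ 2 = ∑ i ∈ Finset.range m, ∑ j ∈ Finset.range m,
      (W i ω - a) * (W j ω - a) := by
    intro ω
    rw [sq, Finset.sum_mul_sum]
  have hTint : Integrable (fun ω => T ω ^ 2) μ := by
    rw [show (fun ω => T ω ^ 2) = fun ω => ∑ i ∈ Finset.range m, ∑ j ∈ Finset.range m,
      (W i ω - a) * (W j ω - a) from funext hTsq]
    exact integrable_finset_sum _ fun i hi => integrable_finset_sum _ fun j hj => hint i hi j hj
  have hT2 : ∫ ω, T ω ^ 2 ∂μ ≤ m * V := by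
    rw [show (fun ω => T ω ^ 2) = fun ω => ∑ i ∈ Finset.range m, ∑ j ∈ Finset.range m,
      (W i ω - a) * (W j ω - a) from funext hTsq]
    rw [integral_finset_sum _ fun i hi => integrable_finset_sum _ fun j hj => hint i hi j hj]
    have hrow : ∀ i ∈ Finset.range m,
        (∫ ω, ∑ j ∈ Finset.range m, (W i ω - a) * (W j ω - a) ∂μ) ≤ V := by
      intro i hi
      rw [integral_finset_sum _ fun j hj => hint i hi j hj]
      rw [Finset.sum_eq_single i (fun j hj hji => hcross i hi j hj (Ne.symm hji))
        (fun h => absurd hi h)]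
      exact hvar i hi
    calc (∑ i ∈ Finset.range m, ∫ ω, ∑ j ∈ Finset.range m, (W i ω - a) * (W j ω - a) ∂μ)
        ≤ ∑ _i ∈ Finset.range m, V := Finset.sum_le_sum hrow
      _ = m * V := by rw [Finset.sum_const, Finset.card_range, nsmul_eq_mul]
  have hsub : {ω | s < |(1 / (m:ℝ)) * (∑ i ∈ Finset.range m, W i ω) - a|}
      ⊆ {ω | ((m:ℝ) * s) ^ 2 ≤ T ω ^ 2} := by
    intro ω hω
    simp only [Set.mem_setOf_eq] at *
    have hTval : T ω = (∑ i ∈ Finset.range m, W i ω) - m * a := by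
      show (∑ i ∈ Finset.range m, (W i ω - a)) = _
      rw [Finset.sum_sub_distrib, Finset.sum_const, Finset.card_range, nsmul_eq_mul]
    have h1 : (1 / (m:ℝ)) * (∑ i ∈ Finset.range m, W i ω) - a = T ω / m := by
      rw [hTval]; field_simp
    rw [h1] at hω
    have h2 : (m:ℝ) * s < |T ω| := by
      rw [abs_div, abs_of_pos hmR] at hω
      calc (m:ℝ) * s < m * (|T ω| / m) := by
            exact (mul_lt_mul_iff_right₀ hmR).mpr hω
        _ = |T ω| := by field_simp
    have h3 : ((m:ℝ) * s) ^ 2 ≤ |T ω| ^ 2 := by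
      nlinarith [mul_pos hmR hs, abs_nonneg (T ω)]
    calc ((m:ℝ) * s) ^ 2 ≤ |T ω| ^ 2 := h3
      _ = T ω ^ 2 := sq_abs _
  have hmarkov := mul_meas_ge_le_integral_of_nonneg
    (ae_of_all μ fun ω => sq_nonneg (T ω)) hTint (((m:ℝ) * s) ^ 2)
  have hmeas_mono : (μ {ω | s < |(1 / (m:ℝ)) * (∑ i ∈ Finset.range m, W i ω) - a|}).toReal
      ≤ (μ {ω | ((m:ℝ) * s) ^ 2 ≤ T ω ^ 2}).toReal :=
    ENNReal.toReal_mono (measure_ne_top μ _) (measure_mono hsub)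
  have heps : (0:ℝ) < ((m:ℝ) * s) ^ 2 := by positivity
  have hfinal : (μ {ω | ((m:ℝ) * s) ^ 2 ≤ T ω ^ 2}).toReal ≤ (m * V) / ((m:ℝ) * s) ^ 2 := by
    rw [le_div_iff₀ heps]
    calc (μ {ω | ((m:ℝ) * s) ^ 2 ≤ T ω ^ 2}).toReal * ((m:ℝ) * s) ^ 2
        = ((m:ℝ) * s) ^ 2 * (μ {ω | ((m:ℝ) * s) ^ 2 ≤ T ω ^ 2}).toReal := mul_comm _ _
      _ ≤ ∫ ω, T ω ^ 2 ∂μ := hmarkov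
      _ ≤ m * V := hT2
  refine hmeas_mono.trans (hfinal.trans (le_of_eq ?_))
  field_simp

end cheby

lemma quad_bound (a b c d : ℝ) : |a * b * (c * d)| ≤ (a^4 + b^4 + c^4 + d^4)/4 := by
  have h1 : |a * b| ≤ (a^2 + b^2)/2 := by
    rw [abs_mul]
    nlinarith [sq_nonneg (|a| - |b|), sq_abs a, sq_abs b, abs_nonneg a, abs_nonneg b]
  have h2 : |c * d| ≤ (c^2 + d^2)/2 := by
    rw [abs_mul]
    nlinarith [sq_nonneg (|c| - |d|), sq_abs c, sq_abs d, abs_nonneg c, abs_nonneg d]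
  have h3 : |a * b * (c * d)| = |a * b| * |c * d| := abs_mul _ _
  rw [h3]
  nlinarith [abs_nonneg (a*b), abs_nonneg (c*d), sq_nonneg (a^2 + b^2 - (c^2 + d^2)),
    sq_nonneg (a^2 - b^2), sq_nonneg (c^2 - d^2)]

lemma pair_bound (a b : ℝ) : |a * b| ≤ (a^2 + b^2)/2 := by
  rw [abs_mul]
  nlinarith [sq_nonneg (|a| - |b|), sq_abs a, sq_abs b, abs_nonneg a, abs_nonneg b]

section moments

variable {Ω : Type} [MeasurableSpace Ω] {μ : Measure Ω} [IsProbabilityMeasure μ]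
variable {ι : Type*} {X : ι → Ω → ℝ}

lemma L_int1 (hXmeas : ∀ t, Measurable (X t))
    (hXmap : ∀ t, Measure.map (X t) μ = gaussianReal 0 1) (t : ι) :
    Integrable (X t) μ := by
  have := gaussX_integrable_pow (hXmeas t) (hXmap t) 1
  simpa using this

lemma L_int2 (hXmeas : ∀ t, Measurable (X t))
    (hXmap : ∀ t, Measure.map (X t) μ = gaussianReal 0 1) (t u : ι) :
    Integrable (fun ω => X t ω * X u ω) μ := by
  have hg : Integrable (fun ω => (X t ω ^ 2 + X u ω ^ 2)/2) μ :=
    ((gaussX_integrable_pow (hXmeas t) (hXmap t) 2).add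
      (gaussX_integrable_pow (hXmeas u) (hXmap u) 2)).div_const 2
  refine hg.mono' (((hXmeas t).mul (hXmeas u)).aestronglyMeasurable) ?_
  refine ae_of_all _ fun ω => ?_
  have := pair_bound (X t ω) (X u ω)
  calc ‖X t ω * X u ω‖ = |X t ω * X u ω| := rfl
    _ ≤ (X t ω ^ 2 + X u ω ^ 2)/2 := this

lemma L_int4 (hXmeas : ∀ t, Measurable (X t))
    (hXmap : ∀ t, Measure.map (X t) μ = gaussianReal 0 1) (t u v w : ι) :
    Integrable (fun ω => (X t ω * X u ω) * (X v ω * X w ω)) μ := by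
  have hg : Integrable (fun ω =>
      (X t ω ^ 4 + X u ω ^ 4 + X v ω ^ 4 + X w ω ^ 4)/4) μ :=
    ((((gaussX_integrable_pow (hXmeas t) (hXmap t) 4).add
      (gaussX_integrable_pow (hXmeas u) (hXmap u) 4)).add
      (gaussX_integrable_pow (hXmeas v) (hXmap v) 4)).add
      (gaussX_integrable_pow (hXmeas w) (hXmap w) 4)).div_const 4
  refine hg.mono' ((((hXmeas t).mul (hXmeas u)).mul
    ((hXmeas v).mul (hXmeas w))).aestronglyMeasurable) ?_
  refine ae_of_all _ fun ω => ?_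
  have := quad_bound (X t ω) (X u ω) (X v ω) (X w ω)
  calc ‖(X t ω * X u ω) * (X v ω * X w ω)‖ = |X t ω * X u ω * (X v ω * X w ω)| := rfl
    _ ≤ (X t ω ^ 4 + X u ω ^ 4 + X v ω ^ 4 + X w ω ^ 4)/4 := this

lemma L_abs4 (hXmeas : ∀ t, Measurable (X t))
    (hXmap : ∀ t, Measure.map (X t) μ = gaussianReal 0 1) (t u v w : ι) :
    |∫ ω, (X t ω * X u ω) * (X v ω * X w ω) ∂μ| ≤ gm4 := by
  have h1 : |∫ ω, (X t ω * X u ω) * (X v ω * X w ω) ∂μ|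
      ≤ ∫ ω, |(X t ω * X u ω) * (X v ω * X w ω)| ∂μ := by
    exact norm_integral_le_integral_norm (fun ω => (X t ω * X u ω) * (X v ω * X w ω)) (μ := μ)
  refine h1.trans ?_
  have hg : Integrable (fun ω =>
      (X t ω ^ 4 + X u ω ^ 4 + X v ω ^ 4 + X w ω ^ 4)/4) μ :=
    ((((gaussX_integrable_pow (hXmeas t) (hXmap t) 4).add
      (gaussX_integrable_pow (hXmeas u) (hXmap u) 4)).add
      (gaussX_integrable_pow (hXmeas v) (hXmap v) 4)).add
      (gaussX_integrable_pow (hXmeas w) (hXmap w) 4)).div_const 4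
  have h2 : ∫ ω, |(X t ω * X u ω) * (X v ω * X w ω)| ∂μ
      ≤ ∫ ω, (X t ω ^ 4 + X u ω ^ 4 + X v ω ^ 4 + X w ω ^ 4)/4 ∂μ := by
    refine integral_mono ((L_int4 hXmeas hXmap t u v w).abs) hg fun ω => ?_
    exact quad_bound (X t ω) (X u ω) (X v ω) (X w ω)
  refine h2.trans ?_
  have h3 : ∫ ω, (X t ω ^ 4 + X u ω ^ 4 + X v ω ^ 4 + X w ω ^ 4)/4 ∂μ
      = ((∫ ω, X t ω ^ 4 ∂μ) + (∫ ω, X u ω ^ 4 ∂μ) + (∫ ω, X v ω ^ 4 ∂μ)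
        + (∫ ω, X w ω ^ 4 ∂μ))/4 := by
    rw [integral_div, integral_add, integral_add, integral_add]
    · exact gaussX_integrable_pow (hXmeas t) (hXmap t) 4
    · exact gaussX_integrable_pow (hXmeas u) (hXmap u) 4
    · exact (gaussX_integrable_pow (hXmeas t) (hXmap t) 4).add
        (gaussX_integrable_pow (hXmeas u) (hXmap u) 4)
    · exact gaussX_integrable_pow (hXmeas v) (hXmap v) 4
    · exact ((gaussX_integrable_pow (hXmeas t) (hXmap t) 4).add
        (gaussX_integrable_pow (hXmeas u) (hXmap u) 4)).add
        (gaussX_integrable_pow (hXmeas v) (hXmap v) 4)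
    · exact gaussX_integrable_pow (hXmeas w) (hXmap w) 4
  rw [h3, gaussX_integral_pow (hXmeas t) (hXmap t) 4,
    gaussX_integral_pow (hXmeas u) (hXmap u) 4,
    gaussX_integral_pow (hXmeas v) (hXmap v) 4,
    gaussX_integral_pow (hXmeas w) (hXmap w) 4]
  rw [show ∫ x, x ^ 4 ∂(gaussianReal 0 1) = gm4 from rfl]
  linarith

lemma L_pair (hXmeas : ∀ t, Measurable (X t))
    (hXmap : ∀ t, Measure.map (X t) μ = gaussianReal 0 1)
    (hXind : iIndepFun X μ)
    (t u : ι) (htu : t ≠ u) :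
    ∫ ω, X t ω * X u ω ∂μ = 0 := by
  have hind : IndepFun (X t) (X u) μ := hXind.indepFun htu
  have h := hind.integral_fun_mul_eq_mul_integral (L_int1 hXmeas hXmap t).aestronglyMeasurable (L_int1 hXmeas hXmap u).aestronglyMeasurable
  rw [gaussX_integral_id (hXmeas t) (hXmap t), zero_mul] at h
  exact h

lemma L_sq (hXmeas : ∀ t, Measurable (X t))
    (hXmap : ∀ t, Measure.map (X t) μ = gaussianReal 0 1) (t : ι) :
    ∫ ω, X t ω * X t ω ∂μ = gm2 := by
  have h := gaussX_integral_pow (hXmeas t) (hXmap t) 2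
  have h2 : gm2 = ∫ x, x ^ 2 ∂(gaussianReal 0 1) := rfl
  rw [h2, ← h]
  congr 1
  funext ω
  rw [sq]

end moments

/-- The summand `b_i ⋅ (A_i)_{ℓ i₀}` written in terms of the entry variables. -/
def Zfun {Ω : Type} {n : ℕ} (X : ℕ × Fin n × Fin n → Ω → ℝ) (x0 : Fin n → ℝ)
    (i₀ : Fin n) (i : ℕ) (ℓ : Fin n) (ω : Ω) : ℝ :=
  ∑ t : Fin n × Fin n, (x0 t.1 * x0 t.2) * (X (i, t) ω * X (i, ℓ, i₀) ω)

/-- `ℓ1`-type constant. -/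
def SB {n : ℕ} (x0 : Fin n → ℝ) : ℝ := ∑ t : Fin n × Fin n, |x0 t.1 * x0 t.2|

lemma SB_nonneg {n : ℕ} (x0 : Fin n → ℝ) : 0 ≤ SB x0 :=
  Finset.sum_nonneg fun t _ => abs_nonneg _

section zlemmas

variable {Ω : Type} [MeasurableSpace Ω] {μ : Measure Ω} [IsProbabilityMeasure μ]
variable {n : ℕ} {X : ℕ × Fin n × Fin n → Ω → ℝ} {x0 : Fin n → ℝ} {i₀ : Fin n}

lemma Z_meas (hXmeas : ∀ t, Measurable (X t)) (i : ℕ) (ℓ : Fin n) :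
    Measurable (Zfun X x0 i₀ i ℓ) := by
  unfold Zfun
  exact Finset.measurable_sum _ fun t _ =>
    (((hXmeas (i, t)).mul (hXmeas (i, ℓ, i₀))).const_mul _)

lemma Z_int (hXmeas : ∀ t, Measurable (X t))
    (hXmap : ∀ t, Measure.map (X t) μ = gaussianReal 0 1) (i : ℕ) (ℓ : Fin n) :
    Integrable (Zfun X x0 i₀ i ℓ) μ := by
  unfold Zfun
  exact integrable_finset_sum _ fun t _ =>
    (L_int2 hXmeas hXmap (i, t) (i, ℓ, i₀)).const_mul _

lemma ZZ_expand (i j : ℕ) (ℓ : Fin n) (ω : Ω) :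
    Zfun X x0 i₀ i ℓ ω * Zfun X x0 i₀ j ℓ ω
      = ∑ t : Fin n × Fin n, ∑ s : Fin n × Fin n,
          ((x0 t.1 * x0 t.2) * (x0 s.1 * x0 s.2)) *
            ((X (i, t) ω * X (i, ℓ, i₀) ω) * (X (j, s) ω * X (j, ℓ, i₀) ω)) := by
  unfold Zfun
  rw [Finset.sum_mul_sum]
  refine Finset.sum_congr rfl fun t _ => Finset.sum_congr rfl fun s _ => by ring

lemma ZZ_int (hXmeas : ∀ t, Measurable (X t))
    (hXmap : ∀ t, Measure.map (X t) μ = gaussianReal 0 1) (i j : ℕ) (ℓ : Fin n) :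
    Integrable (fun ω => Zfun X x0 i₀ i ℓ ω * Zfun X x0 i₀ j ℓ ω) μ := by
  rw [show (fun ω => Zfun X x0 i₀ i ℓ ω * Zfun X x0 i₀ j ℓ ω) = fun ω =>
    ∑ t : Fin n × Fin n, ∑ s : Fin n × Fin n,
      ((x0 t.1 * x0 t.2) * (x0 s.1 * x0 s.2)) *
        ((X (i, t) ω * X (i, ℓ, i₀) ω) * (X (j, s) ω * X (j, ℓ, i₀) ω))
    from funext fun ω => ZZ_expand i j ℓ ω]
  exact integrable_finset_sum _ fun t _ => integrable_finset_sum _ fun s _ =>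
    (L_int4 hXmeas hXmap _ _ _ _).const_mul _

lemma Z_mean (hXmeas : ∀ t, Measurable (X t))
    (hXmap : ∀ t, Measure.map (X t) μ = gaussianReal 0 1)
    (hXind : iIndepFun X μ) (i : ℕ) (ℓ : Fin n) :
    ∫ ω, Zfun X x0 i₀ i ℓ ω ∂μ = gm2 * (x0 ℓ * x0 i₀) := by
  unfold Zfun
  rw [integral_finset_sum _ fun t _ =>
    (L_int2 hXmeas hXmap (i, t) (i, ℓ, i₀)).const_mul _]
  have hterm : ∀ t : Fin n × Fin n,
      ∫ ω, (x0 t.1 * x0 t.2) * (X (i, t) ω * X (i, ℓ, i₀) ω) ∂μ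
        = if t = (ℓ, i₀) then gm2 * (x0 ℓ * x0 i₀) else 0 := by
    intro t
    rw [integral_const_mul]
    by_cases ht : t = (ℓ, i₀)
    · subst ht
      rw [if_pos rfl, L_sq hXmeas hXmap (i, ℓ, i₀)]
      ring
    · rw [if_neg ht, L_pair hXmeas hXmap hXind (i, t) (i, ℓ, i₀)
        (by simp only [ne_eq, Prod.mk.injEq]; tauto), mul_zero]
  rw [Finset.sum_congr rfl fun t _ => hterm t]
  rw [Finset.sum_ite_eq' Finset.univ (ℓ, i₀) fun _ => gm2 * (x0 ℓ * x0 i₀)]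
  simp

lemma ZZ_bound (hXmeas : ∀ t, Measurable (X t))
    (hXmap : ∀ t, Measure.map (X t) μ = gaussianReal 0 1) (i j : ℕ) (ℓ : Fin n) :
    ∫ ω, Zfun X x0 i₀ i ℓ ω * Zfun X x0 i₀ j ℓ ω ∂μ ≤ SB x0 ^ 2 * gm4 := by
  rw [show (fun ω => Zfun X x0 i₀ i ℓ ω * Zfun X x0 i₀ j ℓ ω) = fun ω =>
    ∑ t : Fin n × Fin n, ∑ s : Fin n × Fin n,
      ((x0 t.1 * x0 t.2) * (x0 s.1 * x0 s.2)) *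
        ((X (i, t) ω * X (i, ℓ, i₀) ω) * (X (j, s) ω * X (j, ℓ, i₀) ω))
    from funext fun ω => ZZ_expand i j ℓ ω]
  rw [integral_finset_sum _ fun t _ => integrable_finset_sum _ fun s _ =>
    (L_int4 hXmeas hXmap _ _ _ _).const_mul _]
  have hbound : ∀ t : Fin n × Fin n,
      (∫ ω, ∑ s : Fin n × Fin n,
        ((x0 t.1 * x0 t.2) * (x0 s.1 * x0 s.2)) *
          ((X (i, t) ω * X (i, ℓ, i₀) ω) * (X (j, s) ω * X (j, ℓ, i₀) ω)) ∂μ)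
        ≤ ∑ s : Fin n × Fin n, |x0 t.1 * x0 t.2| * |x0 s.1 * x0 s.2| * gm4 := by
    intro t
    rw [integral_finset_sum _ fun s _ => (L_int4 hXmeas hXmap _ _ _ _).const_mul _]
    refine Finset.sum_le_sum fun s _ => ?_
    rw [integral_const_mul]
    have habs := L_abs4 hXmeas hXmap (i, t) (i, ℓ, i₀) (j, s) (j, ℓ, i₀) (μ := μ)
    calc (x0 t.1 * x0 t.2) * (x0 s.1 * x0 s.2) *
          ∫ ω, (X (i, t) ω * X (i, ℓ, i₀) ω) * (X (j, s) ω * X (j, ℓ, i₀) ω) ∂μ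
        ≤ |(x0 t.1 * x0 t.2) * (x0 s.1 * x0 s.2) *
          ∫ ω, (X (i, t) ω * X (i, ℓ, i₀) ω) * (X (j, s) ω * X (j, ℓ, i₀) ω) ∂μ| :=
          le_abs_self _
      _ = |x0 t.1 * x0 t.2| * |x0 s.1 * x0 s.2| *
          |∫ ω, (X (i, t) ω * X (i, ℓ, i₀) ω) * (X (j, s) ω * X (j, ℓ, i₀) ω) ∂μ| := by
          rw [abs_mul, abs_mul]
      _ ≤ |x0 t.1 * x0 t.2| * |x0 s.1 * x0 s.2| * gm4 := by
          refine mul_le_mul_of_nonneg_left habs ?_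
          positivity
  calc (∑ t : Fin n × Fin n, ∫ ω, ∑ s : Fin n × Fin n,
        ((x0 t.1 * x0 t.2) * (x0 s.1 * x0 s.2)) *
          ((X (i, t) ω * X (i, ℓ, i₀) ω) * (X (j, s) ω * X (j, ℓ, i₀) ω)) ∂μ)
      ≤ ∑ t : Fin n × Fin n, ∑ s : Fin n × Fin n,
          |x0 t.1 * x0 t.2| * |x0 s.1 * x0 s.2| * gm4 :=
        Finset.sum_le_sum fun t _ => hbound t
    _ = SB x0 ^ 2 * gm4 := by
        rw [sq]
        unfold SB
        rw [Finset.sum_mul_sum]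
        rw [Finset.sum_mul]
        refine Finset.sum_congr rfl fun t _ => ?_
        rw [Finset.sum_mul]

lemma Z_indep (hXmeas : ∀ t, Measurable (X t))
    (hXind : iIndepFun X μ) (i j : ℕ) (hij : i ≠ j)
    (ℓ : Fin n) : IndepFun (Zfun X x0 i₀ i ℓ) (Zfun X x0 i₀ j ℓ) μ := by
  classical
  let S : Finset (ℕ × Fin n × Fin n) := {i} ×ˢ (Finset.univ : Finset (Fin n × Fin n))
  let T : Finset (ℕ × Fin n × Fin n) := {j} ×ˢ (Finset.univ : Finset (Fin n × Fin n))
  have hST : Disjoint S T := by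
    rw [Finset.disjoint_left]
    rintro ⟨a, b⟩ haS haT
    simp only [S, T, Finset.mem_product, Finset.mem_singleton] at haS haT
    exact hij (haS.1 ▸ haT.1)
  have hblock := hXind.indepFun_finset S T hST hXmeas
  have hmemS : ∀ t : Fin n × Fin n, ((i, t) : ℕ × Fin n × Fin n) ∈ S := fun t => by
    simp [S, Finset.mem_product]
  have hmemT : ∀ t : Fin n × Fin n, ((j, t) : ℕ × Fin n × Fin n) ∈ T := fun t => by
    simp [T, Finset.mem_product]
  let φ : (∀ _ : S, ℝ) → ℝ := fun v =>
    ∑ t : Fin n × Fin n, (x0 t.1 * x0 t.2) * (v ⟨(i, t), hmemS t⟩ * v ⟨(i, ℓ, i₀), hmemS (ℓ, i₀)⟩)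
  let ψ : (∀ _ : T, ℝ) → ℝ := fun v =>
    ∑ t : Fin n × Fin n, (x0 t.1 * x0 t.2) * (v ⟨(j, t), hmemT t⟩ * v ⟨(j, ℓ, i₀), hmemT (ℓ, i₀)⟩)
  have hφ : Measurable φ :=
    Finset.measurable_sum _ fun t _ =>
      (((measurable_pi_apply (⟨(i, t), hmemS t⟩ : S)).mul
        (measurable_pi_apply (⟨(i, ℓ, i₀), hmemS (ℓ, i₀)⟩ : S))).const_mul _)
  have hψ : Measurable ψ :=
    Finset.measurable_sum _ fun t _ =>
      (((measurable_pi_apply (⟨(j, t), hmemT t⟩ : T)).mul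
        (measurable_pi_apply (⟨(j, ℓ, i₀), hmemT (ℓ, i₀)⟩ : T))).const_mul _)
  have h := hblock.comp hφ hψ
  exact h

end zlemmas

section dlemmas

variable {Ω : Type} [MeasurableSpace Ω] {μ : Measure Ω} [IsProbabilityMeasure μ]
variable {n : ℕ} {X : ℕ × Fin n × Fin n → Ω → ℝ} {x0 : Fin n → ℝ} {i₀ : Fin n}

lemma D_int (hXmeas : ∀ t, Measurable (X t))
    (hXmap : ∀ t, Measure.map (X t) μ = gaussianReal 0 1) (i j : ℕ) (ℓ : Fin n) (a : ℝ) :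
    Integrable (fun ω => (Zfun X x0 i₀ i ℓ ω - a) * (Zfun X x0 i₀ j ℓ ω - a)) μ := by
  rw [show (fun ω => (Zfun X x0 i₀ i ℓ ω - a) * (Zfun X x0 i₀ j ℓ ω - a))
      = fun ω => Zfun X x0 i₀ i ℓ ω * Zfun X x0 i₀ j ℓ ω
        - a * Zfun X x0 i₀ i ℓ ω - a * Zfun X x0 i₀ j ℓ ω + a * a
    from funext fun ω => by ring]
  exact (((ZZ_int hXmeas hXmap i j ℓ).sub
    ((Z_int hXmeas hXmap i ℓ).const_mul a)).sub
    ((Z_int hXmeas hXmap j ℓ).const_mul a)).add (integrable_const _)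

lemma D_var (hXmeas : ∀ t, Measurable (X t))
    (hXmap : ∀ t, Measure.map (X t) μ = gaussianReal 0 1)
    (hXind : iIndepFun X μ) (i : ℕ) (ℓ : Fin n) :
    ∫ ω, (Zfun X x0 i₀ i ℓ ω - gm2 * (x0 ℓ * x0 i₀))
        * (Zfun X x0 i₀ i ℓ ω - gm2 * (x0 ℓ * x0 i₀)) ∂μ ≤ SB x0 ^ 2 * gm4 := by
  set a := gm2 * (x0 ℓ * x0 i₀) with ha
  have hexp : (fun ω => (Zfun X x0 i₀ i ℓ ω - a) * (Zfun X x0 i₀ i ℓ ω - a))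
      = fun ω => Zfun X x0 i₀ i ℓ ω * Zfun X x0 i₀ i ℓ ω
        - (2 * a) * Zfun X x0 i₀ i ℓ ω + a * a := funext fun ω => by ring
  have hZa : Integrable (fun ω => 2 * a * Zfun X x0 i₀ i ℓ ω) μ :=
    (Z_int hXmeas hXmap i ℓ).const_mul _
  have hsub : Integrable (fun ω => Zfun X x0 i₀ i ℓ ω * Zfun X x0 i₀ i ℓ ω
      - 2 * a * Zfun X x0 i₀ i ℓ ω) μ := (ZZ_int hXmeas hXmap i i ℓ).sub hZa
  rw [hexp]
  have e1 : ∫ ω, (Zfun X x0 i₀ i ℓ ω * Zfun X x0 i₀ i ℓ ω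
        - 2 * a * Zfun X x0 i₀ i ℓ ω + a * a) ∂μ
      = (∫ ω, (Zfun X x0 i₀ i ℓ ω * Zfun X x0 i₀ i ℓ ω
        - 2 * a * Zfun X x0 i₀ i ℓ ω) ∂μ) + ∫ _ω, (a * a : ℝ) ∂μ :=
    integral_add hsub (integrable_const _)
  have e2 : ∫ ω, (Zfun X x0 i₀ i ℓ ω * Zfun X x0 i₀ i ℓ ω
        - 2 * a * Zfun X x0 i₀ i ℓ ω) ∂μ
      = (∫ ω, Zfun X x0 i₀ i ℓ ω * Zfun X x0 i₀ i ℓ ω ∂μ)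
        - ∫ ω, 2 * a * Zfun X x0 i₀ i ℓ ω ∂μ :=
    integral_sub (ZZ_int hXmeas hXmap i i ℓ) hZa
  have e3 : ∫ ω, 2 * a * Zfun X x0 i₀ i ℓ ω ∂μ = 2 * a * a := by
    rw [integral_const_mul, Z_mean hXmeas hXmap hXind i ℓ, ← ha]
  have e4 : ∫ _ω, (a * a : ℝ) ∂μ = a * a := by
    rw [integral_const]
    simp
  rw [e1, e2, e3, e4]
  have h1 := ZZ_bound hXmeas hXmap i i ℓ (x0 := x0) (i₀ := i₀)
  nlinarith [sq_nonneg a]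

lemma D_cross (hXmeas : ∀ t, Measurable (X t))
    (hXmap : ∀ t, Measure.map (X t) μ = gaussianReal 0 1)
    (hXind : iIndepFun X μ)
    (i j : ℕ) (hij : i ≠ j) (ℓ : Fin n) :
    ∫ ω, (Zfun X x0 i₀ i ℓ ω - gm2 * (x0 ℓ * x0 i₀))
        * (Zfun X x0 i₀ j ℓ ω - gm2 * (x0 ℓ * x0 i₀)) ∂μ = 0 := by
  set a := gm2 * (x0 ℓ * x0 i₀) with ha
  have hindZ := Z_indep hXmeas hXind i j hij ℓ (x0 := x0) (i₀ := i₀)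
  have hindD : IndepFun (fun ω => Zfun X x0 i₀ i ℓ ω - a)
      (fun ω => Zfun X x0 i₀ j ℓ ω - a) μ :=
    hindZ.comp (measurable_id.sub_const a) (measurable_id.sub_const a)
  have hinti : Integrable (fun ω => Zfun X x0 i₀ i ℓ ω - a) μ :=
    (Z_int hXmeas hXmap i ℓ).sub (integrable_const _)
  have hintj : Integrable (fun ω => Zfun X x0 i₀ j ℓ ω - a) μ :=
    (Z_int hXmeas hXmap j ℓ).sub (integrable_const _)
  have h := hindD.integral_fun_mul_eq_mul_integral hinti.aestronglyMeasurable hintj.aestronglyMeasurable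
  have hzi : ∫ ω, (Zfun X x0 i₀ i ℓ ω - a) ∂μ = 0 := by
    rw [integral_sub (Z_int hXmeas hXmap i ℓ) (integrable_const _),
      Z_mean hXmeas hXmap hXind i ℓ, integral_const]
    simp [ha]
  rw [hzi, zero_mul] at h
  exact h

end dlemmas

lemma iIndepFun_congr {Ω ι : Type*} {mΩ : MeasurableSpace Ω} {μ : Measure Ω}
    {f g : ι → Ω → ℝ} (hfg : ∀ i, f i =ᵐ[μ] g i)
    (h : iIndepFun f μ) :
    iIndepFun g μ := by
  rw [iIndepFun_iff_measure_inter_preimage_eq_mul] at h ⊢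
  intro S sets hsets
  have hae : ∀ᵐ ω ∂μ, ∀ i ∈ S, f i ω = g i ω :=
    (Filter.eventually_all_finset S).mpr fun i _ => hfg i
  have h1 : ((⋂ i ∈ S, g i ⁻¹' sets i) : Set Ω) =ᵐ[μ] (⋂ i ∈ S, f i ⁻¹' sets i) := by
    rw [Filter.eventuallyEq_set]
    filter_upwards [hae] with ω hω
    simp only [Set.mem_iInter, Set.mem_preimage]
    constructor
    · intro hmem i hi
      rw [hω i hi]
      exact hmem i hi
    · intro hmem i hi
      rw [← hω i hi]
      exact hmem i hi
  rw [measure_congr h1, h S hsets]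
  refine Finset.prod_congr rfl fun i hi => ?_
  refine measure_congr ?_
  rw [Filter.eventuallyEq_set]
  filter_upwards [hfg i] with ω hω
  simp only [Set.mem_preimage, hω]

lemma vnorm_nonneg' {n : ℕ} (x : Fin n → ℝ) : 0 ≤ vnorm x := Real.sqrt_nonneg _

lemma vnorm_pos' {n : ℕ} {x : Fin n → ℝ} (hx : x ≠ 0) : 0 < vnorm x := by
  obtain ⟨j, hj⟩ := Function.ne_iff.mp hx
  refine Real.sqrt_pos.mpr (Finset.sum_pos' (fun i _ => sq_nonneg _)
    ⟨j, Finset.mem_univ j, ?_⟩)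
  have hj' : x j ≠ 0 := hj
  positivity

lemma vnorm_zero_fun {n : ℕ} : vnorm (fun _ : Fin n => (0:ℝ)) = 0 := by
  unfold vnorm
  simp

theorem aux_tendsto {Ω : Type} [MeasurableSpace Ω] {μ : Measure Ω} [IsProbabilityMeasure μ]
    {n : ℕ} (k : ℕ) (x0 : Fin n → ℝ) (i₀ : Fin n) (hx0 : x0 ≠ 0)
    (hmax : |x0 i₀| = vnormInf x0)
    (X : ℕ × Fin n × Fin n → Ω → ℝ) (hXmeas : ∀ t, Measurable (X t))
    (hXmap : ∀ t, Measure.map (X t) μ = gaussianReal 0 1)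
    (hXind : iIndepFun X μ) :
    Tendsto (fun m : ℕ => (μ {ω |
        (∀ ℓ : Fin n,
          Real.sqrt (Real.log m / m) * vnorm x0 ^ 2 <
            |(1 / (m : ℝ)) * ∑ i ∈ Finset.range m, Zfun X x0 i₀ i ℓ ω| →
          x0 ℓ ≠ 0) ∧
        vnorm (Set.indicator {j : Fin n |
            ¬ (Real.sqrt (Real.log m / m) * vnorm x0 ^ 2 <
              |(1 / (m : ℝ)) * ∑ i ∈ Finset.range m, Zfun X x0 i₀ i j ω|)} x0) ≤
          (vnorm x0 / vnormInf x0) * vnorm x0 ^ 2 *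
            Real.sqrt ((k : ℝ) * Real.log m / m)}).toReal)
      atTop (nhds 1) := by
  classical
  obtain ⟨j0, hj0⟩ := Function.ne_iff.mp hx0
  have hj0' : x0 j0 ≠ 0 := hj0
  have hvn : 0 < vnorm x0 := vnorm_pos' hx0
  have hvn2 : 0 < vnorm x0 ^ 2 := pow_pos hvn 2
  have hi₀ : 0 < |x0 i₀| := by
    rw [hmax]
    have hle : |x0 j0| ≤ vnormInf x0 := by
      have hh : vnormInf x0 = ⨆ i, |x0 i| := rfl
      rw [hh]
      exact le_ciSup (Set.Finite.bddAbove (Set.finite_range fun i => |x0 i|)) j0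
    exact lt_of_lt_of_le (abs_pos.mpr hj0') hle
  -- the minimal nonzero magnitude
  set sfin : Finset (Fin n) := Finset.univ.filter (fun j => x0 j ≠ 0) with hsfin
  have hne : sfin.Nonempty := ⟨j0, by simp [hsfin, hj0']⟩
  set δ : ℝ := sfin.inf' hne (fun j => |x0 j|) with hδ
  have hδpos : 0 < δ := by
    rw [hδ, Finset.lt_inf'_iff]
    intro i hi
    rw [hsfin, Finset.mem_filter] at hi
    exact abs_pos.mpr hi.2
  have hδle : ∀ j : Fin n, x0 j ≠ 0 → δ ≤ |x0 j| := fun j h =>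
    Finset.inf'_le _ (by simp [hsfin, h])
  set ρ : ℝ := gm2 * (δ * |x0 i₀|) with hρdef
  have hρpos : 0 < ρ := mul_pos gm2_pos (mul_pos hδpos hi₀)
  set thr : ℕ → ℝ := fun m => Real.sqrt (Real.log m / m) * vnorm x0 ^ 2 with hthr
  -- threshold tends to zero
  have hlogx : Tendsto (fun x : ℝ => Real.log x / x) atTop (nhds 0) := by
    simpa using Real.tendsto_pow_log_div_mul_add_atTop 1 0 1 one_ne_zero
  have hlogm : Tendsto (fun m : ℕ => Real.log m / m) atTop (nhds 0) :=
    hlogx.comp tendsto_natCast_atTop_atTop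
  have hsqrt0 : Tendsto (fun m : ℕ => Real.sqrt (Real.log m / m)) atTop (nhds 0) := by
    have h := (Real.continuous_sqrt.tendsto 0).comp hlogm
    simp only [Function.comp_def, Real.sqrt_zero] at h
    exact h
  have hthr0 : Tendsto thr atTop (nhds 0) := by
    rw [hthr]
    have := hsqrt0.mul_const (vnorm x0 ^ 2)
    simpa using this
  -- positivity of the threshold for m ≥ 2
  have hthrpos : ∀ m : ℕ, 2 ≤ m → 0 < thr m := by
    intro m hm
    rw [hthr]
    have h1 : (1:ℝ) < m := by exact_mod_cast Nat.lt_of_lt_of_le Nat.one_lt_two hm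
    have hlog : 0 < Real.log m := Real.log_pos h1
    have hmpos : (0:ℝ) < m := by linarith
    have : 0 < Real.log m / m := div_pos hlog hmpos
    exact mul_pos (Real.sqrt_pos.mpr this) hvn2
  -- the good event
  set G : ℕ → Set Ω := fun m => {ω | ∀ ℓ : Fin n,
    |(1 / (m:ℝ)) * (∑ i ∈ Finset.range m, Zfun X x0 i₀ i ℓ ω)
      - gm2 * (x0 ℓ * x0 i₀)| ≤ thr m / 2} with hG
  -- Chebyshev per coordinate
  have hcheb : ∀ m : ℕ, 2 ≤ m → ∀ ℓ : Fin n,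
      (μ {ω | thr m / 2 < |(1 / (m:ℝ)) * (∑ i ∈ Finset.range m, Zfun X x0 i₀ i ℓ ω)
        - gm2 * (x0 ℓ * x0 i₀)|}).toReal
        ≤ SB x0 ^ 2 * gm4 / (m * (thr m / 2) ^ 2) := by
    intro m hm ℓ
    refine chebyshev_sum (fun i => Zfun X x0 i₀ i ℓ) (gm2 * (x0 ℓ * x0 i₀))
      (SB x0 ^ 2 * gm4) (thr m / 2) m (by omega) (by have h := hthrpos m hm; linarith) ?_ ?_ ?_
    · exact fun i _ j _ => D_int hXmeas hXmap i j ℓ _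
    · exact fun i _ => D_var hXmeas hXmap hXind i ℓ
    · exact fun i _ j _ hij => D_cross hXmeas hXmap hXind i j hij ℓ
  -- union bound
  set Cst : ℝ := 4 * n * (SB x0 ^ 2 * gm4) / (vnorm x0 ^ 2) ^ 2 with hCst
  have hunion : ∀ m : ℕ, 2 ≤ m →
      (μ (G m)ᶜ).toReal ≤ Cst / Real.log m := by
    intro m hm
    have hmpos : (0:ℝ) < m := by
      have : (2:ℝ) ≤ m := by exact_mod_cast hm
      linarith
    have hlogpos : 0 < Real.log m :=
      Real.log_pos (by exact_mod_cast Nat.lt_of_lt_of_le Nat.one_lt_two hm)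
    have hsub : (G m)ᶜ ⊆ ⋃ ℓ : Fin n, {ω | thr m / 2 <
        |(1 / (m:ℝ)) * (∑ i ∈ Finset.range m, Zfun X x0 i₀ i ℓ ω)
          - gm2 * (x0 ℓ * x0 i₀)|} := by
      intro ω hω
      simp only [hG, Set.mem_compl_iff, Set.mem_setOf_eq, not_forall, not_le] at hω
      obtain ⟨ℓ, hℓ⟩ := hω
      exact Set.mem_iUnion.mpr ⟨ℓ, hℓ⟩
    have h1 : μ ((G m)ᶜ) ≤ ∑ ℓ : Fin n, μ {ω | thr m / 2 <
        |(1 / (m:ℝ)) * (∑ i ∈ Finset.range m, Zfun X x0 i₀ i ℓ ω)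
          - gm2 * (x0 ℓ * x0 i₀)|} := by
      refine (measure_mono hsub).trans ?_
      rw [← tsum_fintype (L := SummationFilter.unconditional _)]
      exact measure_iUnion_le _
    have h2 : (μ ((G m)ᶜ)).toReal ≤ ∑ ℓ : Fin n, (μ {ω | thr m / 2 <
        |(1 / (m:ℝ)) * (∑ i ∈ Finset.range m, Zfun X x0 i₀ i ℓ ω)
          - gm2 * (x0 ℓ * x0 i₀)|}).toReal := by
      refine (ENNReal.toReal_mono ?_ h1).trans ?_
      · exact (ENNReal.sum_lt_top.mpr fun ℓ _ => measure_lt_top μ _).ne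
      · rw [ENNReal.toReal_sum fun ℓ _ => (measure_lt_top μ _).ne]
    refine h2.trans ?_
    have h3 : ∀ ℓ : Fin n, (μ {ω | thr m / 2 <
        |(1 / (m:ℝ)) * (∑ i ∈ Finset.range m, Zfun X x0 i₀ i ℓ ω)
          - gm2 * (x0 ℓ * x0 i₀)|}).toReal ≤ SB x0 ^ 2 * gm4 / (m * (thr m / 2) ^ 2) :=
      hcheb m hm
    refine (Finset.sum_le_sum fun ℓ _ => h3 ℓ).trans ?_
    rw [Finset.sum_const, Finset.card_univ, Fintype.card_fin, nsmul_eq_mul]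
    -- algebra: m * (thr m / 2)^2 = log m * (vnorm x0^2)^2 / 4
    have hth2 : (thr m) ^ 2 = (Real.log m / m) * (vnorm x0 ^ 2) ^ 2 := by
      rw [hthr, mul_pow, Real.sq_sqrt (by positivity)]
    have hkey : (m : ℝ) * (thr m / 2) ^ 2 = Real.log m * (vnorm x0 ^ 2) ^ 2 / 4 := by
      rw [div_pow, hth2]
      field_simp
      ring
    rw [hkey, hCst]
    have hL : Real.log m ≠ 0 := hlogpos.ne'
    have hV : vnorm x0 ^ 2 ≠ 0 := hvn2.ne'
    refine le_of_eq ?_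
    field_simp
  -- inclusion of the good event in the target event
  have hincl : ∀ m : ℕ, 2 ≤ m → (3/2) * thr m < ρ →
      G m ⊆ {ω |
        (∀ ℓ : Fin n,
          thr m < |(1 / (m : ℝ)) * ∑ i ∈ Finset.range m, Zfun X x0 i₀ i ℓ ω| →
          x0 ℓ ≠ 0) ∧
        vnorm (Set.indicator {j : Fin n |
            ¬ (thr m < |(1 / (m : ℝ)) * ∑ i ∈ Finset.range m, Zfun X x0 i₀ i j ω|)} x0) ≤
          (vnorm x0 / vnormInf x0) * vnorm x0 ^ 2 *
            Real.sqrt ((k : ℝ) * Real.log m / m)} := by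
    intro m hm2 hsmall ω hω
    have hthrp := hthrpos m hm2
    have hωl : ∀ ℓ : Fin n,
        |(1 / (m:ℝ)) * (∑ i ∈ Finset.range m, Zfun X x0 i₀ i ℓ ω)
          - gm2 * (x0 ℓ * x0 i₀)| ≤ thr m / 2 := hω
    constructor
    · intro ℓ hℓ h0
      have hG := hωl ℓ
      rw [h0] at hG
      simp only [zero_mul, mul_zero, sub_zero] at hG
      linarith [hℓ, hG]
    · have hzero : Set.indicator {j : Fin n |
          ¬ (thr m < |(1 / (m : ℝ)) * ∑ i ∈ Finset.range m, Zfun X x0 i₀ i j ω|)} x0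
          = fun _ => (0:ℝ) := by
        funext j
        by_cases hxj : x0 j = 0
        · simp [Set.indicator_apply, hxj]
        · have haj : ρ ≤ |gm2 * (x0 j * x0 i₀)| := by
            rw [abs_mul, abs_mul, abs_of_pos gm2_pos, hρdef]
            have h1 : δ ≤ |x0 j| := hδle j hxj
            have h2 : δ * |x0 i₀| ≤ |x0 j| * |x0 i₀| :=
              mul_le_mul_of_nonneg_right h1 (abs_nonneg _)
            nlinarith [gm2_pos]
          have hGj := hωl j
          have htri : |gm2 * (x0 j * x0 i₀)|
              - |(1 / (m:ℝ)) * (∑ i ∈ Finset.range m, Zfun X x0 i₀ i j ω)|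
              ≤ |(1 / (m:ℝ)) * (∑ i ∈ Finset.range m, Zfun X x0 i₀ i j ω)
                - gm2 * (x0 j * x0 i₀)| := by
            have := abs_sub_abs_le_abs_sub (gm2 * (x0 j * x0 i₀))
              ((1 / (m:ℝ)) * (∑ i ∈ Finset.range m, Zfun X x0 i₀ i j ω))
            rw [abs_sub_comm] at this
            linarith
          have hj : thr m < |(1 / (m : ℝ)) * ∑ i ∈ Finset.range m, Zfun X x0 i₀ i j ω| := by
            linarith
          exact Set.indicator_of_notMem (not_not.mpr hj) x0
      rw [hzero, vnorm_zero_fun]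
      have hInf : 0 ≤ vnormInf x0 := by rw [← hmax]; exact abs_nonneg _
      exact mul_nonneg (mul_nonneg (div_nonneg (vnorm_nonneg' x0) hInf) hvn2.le)
        (Real.sqrt_nonneg _)
  -- small threshold eventually
  have h32 : Tendsto (fun m : ℕ => (3/2 : ℝ) * thr m) atTop (nhds 0) := by
    have h := hthr0.const_mul (3/2 : ℝ)
    rw [mul_zero] at h
    exact h
  have hsmallev : ∀ᶠ m : ℕ in atTop, (3/2 : ℝ) * thr m < ρ :=
    h32.eventually_lt_const hρpos
  -- the limit of the lower bound
  have hCtend : Tendsto (fun m : ℕ => Cst / Real.log m) atTop (nhds 0) := by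
    have hloginv : Tendsto (fun m : ℕ => (Real.log m)⁻¹) atTop (nhds 0) :=
      (Real.tendsto_log_atTop.comp tendsto_natCast_atTop_atTop).inv_tendsto_atTop
    have := hloginv.const_mul Cst
    simpa [div_eq_mul_inv] using this
  have hlo : Tendsto (fun m : ℕ => 1 - Cst / Real.log m) atTop (nhds 1) := by
    have h := hCtend.const_sub (1:ℝ)
    rw [sub_zero] at h
    exact h
  refine tendsto_of_tendsto_of_tendsto_of_le_of_le' hlo tendsto_const_nhds ?_ ?_
  · filter_upwards [eventually_ge_atTop 2, hsmallev] with m hm2 hsm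
    have hincl' := hincl m hm2 hsm
    have hmono : (μ (G m)).toReal ≤ (μ {ω |
        (∀ ℓ : Fin n,
          Real.sqrt (Real.log m / m) * vnorm x0 ^ 2 <
            |(1 / (m : ℝ)) * ∑ i ∈ Finset.range m, Zfun X x0 i₀ i ℓ ω| →
          x0 ℓ ≠ 0) ∧
        vnorm (Set.indicator {j : Fin n |
            ¬ (Real.sqrt (Real.log m / m) * vnorm x0 ^ 2 <
              |(1 / (m : ℝ)) * ∑ i ∈ Finset.range m, Zfun X x0 i₀ i j ω|)} x0) ≤
          (vnorm x0 / vnormInf x0) * vnorm x0 ^ 2 *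
            Real.sqrt ((k : ℝ) * Real.log m / m)}).toReal := by
      refine ENNReal.toReal_mono (measure_ne_top μ _) (measure_mono ?_)
      intro ω hω
      exact hincl' hω
    have hG1 : 1 ≤ (μ (G m)).toReal + (μ (G m)ᶜ).toReal := by
      have h := measure_union_le (μ := μ) (G m) (G m)ᶜ
      rw [Set.union_compl_self] at h
      have h2 := ENNReal.toReal_mono
        (ENNReal.add_ne_top.mpr ⟨measure_ne_top μ _, measure_ne_top μ _⟩) h
      rw [measure_univ, ENNReal.toReal_one,
        ENNReal.toReal_add (measure_ne_top μ _) (measure_ne_top μ _)] at h2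
      exact h2
    have hun := hunion m hm2
    linarith
  · refine Filter.Eventually.of_forall fun m => ?_
    have h1 : (μ {ω |
        (∀ ℓ : Fin n,
          Real.sqrt (Real.log m / m) * vnorm x0 ^ 2 <
            |(1 / (m : ℝ)) * ∑ i ∈ Finset.range m, Zfun X x0 i₀ i ℓ ω| →
          x0 ℓ ≠ 0) ∧
        vnorm (Set.indicator {j : Fin n |
            ¬ (Real.sqrt (Real.log m / m) * vnorm x0 ^ 2 <
              |(1 / (m : ℝ)) * ∑ i ∈ Finset.range m, Zfun X x0 i₀ i j ω|)} x0) ≤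
          (vnorm x0 / vnormInf x0) * vnorm x0 ^ 2 *
            Real.sqrt ((k : ℝ) * Real.log m / m)}).toReal
        ≤ (μ Set.univ).toReal :=
      ENNReal.toReal_mono (measure_ne_top μ _) (measure_mono (Set.subset_univ _))
    simpa using h1

/-- **Column estimator and thresholded support estimate.**
With `b i = ⟨A i, x₀x₀ᵀ⟩`, `ŷ[ℓ] = (1/m) ∑_{i<m} b i · A i[ℓ, i₀]` (the `i₀`-th columns, `i₀`
being the index of the largest-magnitude entry of `x₀`), and
`Ŝ = {ℓ : |ŷ[ℓ]| > C √(log m / m) ‖x₀‖²}`, with probability `1 − o_m(1)` one has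
`Ŝ ⊆ supp x₀` and `‖(x₀)_{Ŝᶜ}‖ ≤ μ₀⁻¹ ‖x₀‖² √(k log m / m)`, where `μ₀ = ‖x₀‖_∞/‖x₀‖₂`. -/
theorem thresholded_support_estimate :
    ∃ C : ℝ, 0 < C ∧
      ∀ (Ω : Type) (_ : MeasurableSpace Ω) (μ : Measure Ω), IsProbabilityMeasure μ →
        ∀ (n k : ℕ) (x0 : Fin n → ℝ) (i₀ : Fin n),
          sparsity x0 = k → |x0 i₀| = vnormInf x0 →
          ∀ (A : ℕ → Ω → Fin n → Fin n → ℝ),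
            (∀ i p q, Measure.map (fun ω => A i ω p q) μ = gaussianReal 0 1) →
            iIndepFun
              (fun t : ℕ × Fin n × Fin n => fun ω => A t.1 ω t.2.1 t.2.2) μ →
            Tendsto (fun m : ℕ => (μ {ω |
                (∀ ℓ : Fin n,
                  C * Real.sqrt (Real.log m / m) * vnorm x0 ^ 2 <
                    |(1 / (m : ℝ)) * ∑ i ∈ Finset.range m,
                        mip (A i ω) (outer x0 x0) * A i ω ℓ i₀| →
                  x0 ℓ ≠ 0) ∧
                vnorm (Set.indicator {j : Fin n |
                    ¬ (C * Real.sqrt (Real.log m / m) * vnorm x0 ^ 2 <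
                      |(1 / (m : ℝ)) * ∑ i ∈ Finset.range m,
                          mip (A i ω) (outer x0 x0) * A i ω j i₀|)} x0) ≤
                  (vnorm x0 / vnormInf x0) * vnorm x0 ^ 2 *
                    Real.sqrt ((k : ℝ) * Real.log m / m)}).toReal)
              atTop (nhds 1) := by
  refine ⟨1, one_pos, ?_⟩
  intro Ω mΩ μ hμprob n k x0 i₀ _hk hmax A hlaw hind
  haveI := hμprob
  by_cases hx0 : x0 = 0
  · subst hx0
    have hset : ∀ m : ℕ, {ω : Ω |
        (∀ ℓ : Fin n,
          1 * Real.sqrt (Real.log m / m) * vnorm (0 : Fin n → ℝ) ^ 2 <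
            |(1 / (m : ℝ)) * ∑ i ∈ Finset.range m,
                mip (A i ω) (outer 0 0) * A i ω ℓ i₀| →
          (0 : Fin n → ℝ) ℓ ≠ 0) ∧
        vnorm (Set.indicator {j : Fin n |
            ¬ (1 * Real.sqrt (Real.log m / m) * vnorm (0 : Fin n → ℝ) ^ 2 <
              |(1 / (m : ℝ)) * ∑ i ∈ Finset.range m,
                  mip (A i ω) (outer 0 0) * A i ω j i₀|)} (0 : Fin n → ℝ)) ≤
          (vnorm (0 : Fin n → ℝ) / vnormInf (0 : Fin n → ℝ)) * vnorm (0 : Fin n → ℝ) ^ 2 *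
            Real.sqrt ((k : ℝ) * Real.log m / m)} = Set.univ := by
      intro m
      refine Set.eq_univ_of_forall fun ω => ?_
      constructor
      · intro ℓ h
        exfalso
        simp [mip, outer, vnorm] at h
      · simp [vnorm, Set.indicator_zero']
    simp only [hset, measure_univ, ENNReal.toReal_one]
    exact tendsto_const_nhds
  · have haem : ∀ t : ℕ × Fin n × Fin n,
        AEMeasurable (fun ω => A t.1 ω t.2.1 t.2.2) μ := by
      intro t
      by_contra hc
      have h := hlaw t.1 t.2.1 t.2.2
      rw [Measure.map_of_not_aemeasurable hc] at h
      exact (IsProbabilityMeasure.ne_zero (gaussianReal 0 1)) h.symm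
    set X : ℕ × Fin n × Fin n → Ω → ℝ := fun t => (haem t).mk _ with hXdef
    have hXmeas : ∀ t, Measurable (X t) := fun t => (haem t).measurable_mk
    have hXae : ∀ t : ℕ × Fin n × Fin n,
        (fun ω => A t.1 ω t.2.1 t.2.2) =ᵐ[μ] X t := fun t => (haem t).ae_eq_mk
    have hXmap : ∀ t, Measure.map (X t) μ = gaussianReal 0 1 := fun t => by
      rw [← Measure.map_congr (hXae t)]
      exact hlaw t.1 t.2.1 t.2.2
    have hXind : iIndepFun X μ :=
      iIndepFun_congr hXae hind
    have haux := aux_tendsto k x0 i₀ hx0 hmax X hXmeas hXmap hXind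
    have hN : ∀ᵐ ω ∂μ, ∀ t : ℕ × Fin n × Fin n, A t.1 ω t.2.1 t.2.2 = X t ω :=
      ae_all_iff.mpr fun t => hXae t
    have hZeq : ∀ ω : Ω, (∀ t : ℕ × Fin n × Fin n, A t.1 ω t.2.1 t.2.2 = X t ω) →
        ∀ (i : ℕ) (ℓ : Fin n),
          mip (A i ω) (outer x0 x0) * A i ω ℓ i₀ = Zfun X x0 i₀ i ℓ ω := by
      intro ω hω i ℓ
      unfold mip outer Zfun
      rw [Fintype.sum_prod_type, Finset.sum_mul]
      refine Finset.sum_congr rfl fun p _ => ?_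
      rw [Finset.sum_mul]
      refine Finset.sum_congr rfl fun q _ => ?_
      have h1 := hω (i, p, q)
      have h2 := hω (i, ℓ, i₀)
      rw [← h1, ← h2]
      ring
    have hsetae : ∀ m : ℕ,
        μ {ω : Ω |
          (∀ ℓ : Fin n,
            1 * Real.sqrt (Real.log m / m) * vnorm x0 ^ 2 <
              |(1 / (m : ℝ)) * ∑ i ∈ Finset.range m,
                  mip (A i ω) (outer x0 x0) * A i ω ℓ i₀| →
            x0 ℓ ≠ 0) ∧
          vnorm (Set.indicator {j : Fin n |
              ¬ (1 * Real.sqrt (Real.log m / m) * vnorm x0 ^ 2 <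
                |(1 / (m : ℝ)) * ∑ i ∈ Finset.range m,
                    mip (A i ω) (outer x0 x0) * A i ω j i₀|)} x0) ≤
            (vnorm x0 / vnormInf x0) * vnorm x0 ^ 2 *
              Real.sqrt ((k : ℝ) * Real.log m / m)}
        = μ {ω : Ω |
          (∀ ℓ : Fin n,
            Real.sqrt (Real.log m / m) * vnorm x0 ^ 2 <
              |(1 / (m : ℝ)) * ∑ i ∈ Finset.range m, Zfun X x0 i₀ i ℓ ω| →
            x0 ℓ ≠ 0) ∧
          vnorm (Set.indicator {j : Fin n |
              ¬ (Real.sqrt (Real.log m / m) * vnorm x0 ^ 2 <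
                |(1 / (m : ℝ)) * ∑ i ∈ Finset.range m, Zfun X x0 i₀ i j ω|)} x0) ≤
            (vnorm x0 / vnormInf x0) * vnorm x0 ^ 2 *
              Real.sqrt ((k : ℝ) * Real.log m / m)} := by
      intro m
      refine measure_congr ?_
      rw [Filter.eventuallyEq_set]
      filter_upwards [hN] with ω hω
      have hz := hZeq ω hω
      simp only [Set.mem_setOf_eq, one_mul, hz]
    simp only [hsetae]
    exact haux
end
end
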